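/- arXiv:2402.18327 — 9 statements merged into one kernel-verified Lean document; each statement's English description precedes it below -/
import Mathlib

section
/- Let (X,d) be a metric space which is path connected and pointwise rectifiable path connected. Then X is rectifiable path connected, i.e. for every x,y ∈ X there exists a rectifiable curve from x to y. -/
open MeasureTheory Metric Set Filter
open scoped ENNReal NNReal

noncomputable section

/-- A rectifiable curve from `x` to `y`, encoded via a `1`-Lipschitz
(arclength-type) parametrization on `[0, T]`. -/
structure RectCurve (X : Type*) [MetricSpace X] (x y : X) where
  T : ℝ
  T_nonneg : 0 ≤ T
  toFun : ℝ → X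
  lip : LipschitzOnWith 1 toFun (Set.Icc 0 T)
  source : toFun 0 = x
  target : toFun T = y

/-- Length spent by the curve inside `A` up to time `s`. -/
def RectCurve.lengthInUpTo {X : Type*} [MetricSpace X] {x y : X}
    (c : RectCurve X x y) (A : Set X) (s : ℝ) : ℝ≥0∞ :=
  volume {t : ℝ | t ∈ Set.Icc 0 (min s c.T) ∧ c.toFun t ∈ A}

/-- Total length spent by the curve inside `A`. -/
def RectCurve.lengthIn {X : Type*} [MetricSpace X] {x y : X}
    (c : RectCurve X x y) (A : Set X) : ℝ≥0∞ :=
  c.lengthInUpTo A c.T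

/-- Length of the curve. -/
def RectCurve.length {X : Type*} [MetricSpace X] {x y : X}
    (c : RectCurve X x y) : ℝ≥0∞ :=
  eVariationOn c.toFun (Set.Icc 0 c.T)

/-- The width of `A` with respect to `x, y`: infimum over rectifiable curves
from `x` to `y` of the length spent inside `A` (`∞` if there is no such curve). -/
def width {X : Type*} [MetricSpace X] (x y : X) (A : Set X) : ℝ≥0∞ :=
  ⨅ c : RectCurve X x y, c.lengthIn A

/-- The position function of the set `A` with respect to `x, y`. -/
def posFn {X : Type*} [MetricSpace X] (x y : X) (A : Set X) (z : X) : ℝ≥0∞ :=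
  ⨅ (c : RectCurve X x y) (s : ℝ) (_ : s ∈ Set.Icc 0 c.T) (_ : c.toFun s = z),
    c.lengthInUpTo A s

/-- Topological separating set from `x` to `y`. -/
def IsSepSet {X : Type*} [MetricSpace X] (x y : X) (Ω : Set X) : Prop :=
  IsClosed Ω ∧ ∃ r > 0, Metric.ball x r ⊆ interior Ω ∧ Metric.ball y r ⊆ Ωᶜ

/-- Path-separating set between `x` and `y`: every rectifiable curve from `x`
to `y` meets `A`. -/
def IsPathSep {X : Type*} [MetricSpace X] (x y : X) (A : Set X) : Prop :=
  ∀ c : RectCurve X x y, ∃ t ∈ Set.Icc 0 c.T, c.toFun t ∈ A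

/-- Minkowski content of `Ω` with respect to `μ`. -/
def mink {X : Type*} [MetricSpace X] [MeasurableSpace X] (μ : Measure X) (Ω : Set X) : ℝ≥0∞ :=
  Filter.liminf (fun r : ℝ => μ (Metric.cthickening r Ω \ Ω) / ENNReal.ofReal r)
    (nhdsWithin 0 (Set.Ioi 0))

/-- The Riesz density with poles at `x` and `y` (it vanishes at the poles). -/
def rieszDensity {X : Type*} [MetricSpace X] [MeasurableSpace X] (m : Measure X) (x y : X) (z : X) : ℝ≥0∞ :=
  ENNReal.ofReal (dist x z) / m (Metric.ball x (dist x z))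
    + ENNReal.ofReal (dist y z) / m (Metric.ball y (dist y z))

/-- The `L`-truncated Riesz measure `m_{x,y}^L`. -/
def rieszMeasure {X : Type*} [MetricSpace X] [MeasurableSpace X] (m : Measure X) (x y : X) (L : ℝ) :
    Measure X :=
  m.withDensity
    ((Metric.ball x (2 * L * dist x y) ∪ Metric.ball y (2 * L * dist x y)).indicator
      (rieszDensity m x y))

/-- The local Lipschitz constant `lip u (z)` (with value `0` at isolated points,
since the limsup along the empty filter is `⊥`). -/
def lipConst {X : Type*} [MetricSpace X] (u : X → ℝ) (z : X) : ℝ≥0∞ :=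
  Filter.limsup (fun w => ENNReal.ofReal (|u w - u z| / dist w z))
    (nhdsWithin z {z}ᶜ)

/-- `m` is `C`-doubling. -/
def IsDoubling {X : Type*} [MetricSpace X] [MeasurableSpace X] (m : Measure X) (C : ℝ≥0) : Prop :=
  ∀ (z : X) (r : ℝ), 0 < r → m (Metric.ball z (2 * r)) ≤ C * m (Metric.ball z r)

/-- The separating ratio `m(A)/width_{x,y}(A)`, with the conventions that it is
`∞` when the width vanishes and `0` when the width is infinite. -/
def sepRatio {X : Type*} [MetricSpace X] [MeasurableSpace X] (m : Measure X) (x y : X) (A : Set X) : ℝ≥0∞ :=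
  if width x y A = 0 then ⊤ else m A / width x y A

/-- The support of the measure `m`. -/
def msupport {X : Type*} [MetricSpace X] [MeasurableSpace X] (m : Measure X) : Set X :=
  {z | ∀ r > 0, 0 < m (Metric.ball z r)}

/-- Line integral of a nonnegative density along a rectifiable curve
(in its `1`-Lipschitz parametrization). -/
def lineIntegral {X : Type*} [MetricSpace X] {x y : X}
    (c : RectCurve X x y) (ρ : X → ℝ≥0∞) : ℝ≥0∞ :=
  ∫⁻ t in Set.Icc (0 : ℝ) c.T, ρ (c.toFun t)

/-- Admissible densities for a family of curves. -/
def Adm {X : Type*} [MetricSpace X] [MeasurableSpace X] {x y : X} (Γ : Set (RectCurve X x y)) :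
    Set (X → ℝ≥0∞) :=
  {ρ | Measurable ρ ∧ ∀ c ∈ Γ, 1 ≤ lineIntegral c ρ}

/-- The `p`-modulus of a family of curves with respect to the measure `ν`. -/
def Modulus {X : Type*} [MetricSpace X] [MeasurableSpace X] {x y : X} (p : ℝ)
    (Γ : Set (RectCurve X x y)) (ν : Measure X) : ℝ≥0∞ :=
  ⨅ ρ ∈ Adm Γ, ∫⁻ z, ρ z ^ p ∂ν

end

namespace RectCurve
variable {X : Type*} [MetricSpace X]

noncomputable def refl (x : X) : RectCurve X x x :=
  ⟨0, le_refl 0, fun _ => x, ((LipschitzWith.const x).weaken zero_le_one).lipschitzOnWith, rfl, rfl⟩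

noncomputable def reverse {x y : X} (c : RectCurve X x y) : RectCurve X y x where
  T := c.T
  T_nonneg := c.T_nonneg
  toFun := fun t => c.toFun (c.T - t)
  lip := by
    apply LipschitzOnWith.of_dist_le_mul
    intro s hs t ht
    have := c.lip.dist_le_mul (c.T - s) ⟨by linarith [hs.2], by linarith [hs.1]⟩
      (c.T - t) ⟨by linarith [ht.2], by linarith [ht.1]⟩
    have e : c.T - (c.T - s) = s := by ring
    rw [Real.dist_eq,
      show c.T - s - (c.T - t) = -(s - t) by ring, abs_neg] at this
    rw [Real.dist_eq]
    exact this
  source := by simp [c.target]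
  target := by simp [c.source]

noncomputable def trans {x y z : X} (c : RectCurve X x y) (d : RectCurve X y z) : RectCurve X x z where
  T := c.T + d.T
  T_nonneg := add_nonneg c.T_nonneg d.T_nonneg
  toFun := fun t => if t ≤ c.T then c.toFun t else d.toFun (t - c.T)
  lip := by
    apply LipschitzOnWith.of_dist_le_mul
    have key : ∀ s ∈ Icc (0:ℝ) (c.T + d.T), ∀ t ∈ Icc (0:ℝ) (c.T + d.T), s ≤ t →
        dist (if s ≤ c.T then c.toFun s else d.toFun (s - c.T))
          (if t ≤ c.T then c.toFun t else d.toFun (t - c.T)) ≤ 1 * dist s t := by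
      intro s hs t ht hst
      by_cases h1 : s ≤ c.T <;> by_cases h2 : t ≤ c.T <;> simp only [h1, h2, if_true, if_false]
      · exact c.lip.dist_le_mul s ⟨hs.1, h1⟩ t ⟨ht.1, h2⟩
      · -- s ≤ c.T < t
        push_neg at h2
        have hmid : c.toFun c.T = d.toFun 0 := by rw [c.target, d.source]
        calc dist (c.toFun s) (d.toFun (t - c.T))
            ≤ dist (c.toFun s) (c.toFun c.T) + dist (d.toFun 0) (d.toFun (t - c.T)) := by
              rw [hmid]; exact dist_triangle _ _ _
          _ ≤ 1 * dist s c.T + 1 * dist 0 (t - c.T) := by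
              gcongr
              · exact c.lip.dist_le_mul s ⟨hs.1, h1⟩ c.T ⟨c.T_nonneg, le_refl _⟩
              · exact d.lip.dist_le_mul 0 ⟨le_refl _, d.T_nonneg⟩ (t - c.T)
                  ⟨by linarith, by linarith [ht.2]⟩
          _ ≤ 1 * dist s t := by
              rw [Real.dist_eq, Real.dist_eq, Real.dist_eq]
              rw [abs_of_nonpos (by linarith), abs_of_nonpos (by linarith),
                abs_of_nonpos (by linarith)]
              ring_nf; linarith
      · linarith
      · push_neg at h1
        have := d.lip.dist_le_mul (s - c.T) ⟨by linarith, by linarith [hs.2]⟩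
          (t - c.T) ⟨by linarith, by linarith [ht.2]⟩
        simpa [Real.dist_eq, sub_sub_sub_cancel_right] using this
    intro s hs t ht
    rcases le_total s t with hst | hst
    · exact key s hs t ht hst
    · rw [dist_comm, dist_comm (α := ℝ)]; exact key t ht s hs hst
  source := by simp [c.source, c.T_nonneg]
  target := by
    by_cases h : d.T = 0
    · have hT : d.T = (0:ℝ) := h
      simp only [h, add_zero, le_refl, if_true]
      rw [c.target, ← d.source, ← hT]
      exact d.target
    · have : ¬ c.T + d.T ≤ c.T := by
        have := lt_of_le_of_ne d.T_nonneg (Ne.symm h); linarith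
      simp [this, d.target]

end RectCurve


theorem stmt1 {X : Type*} [MetricSpace X] [PathConnectedSpace X]
    (h : ∀ x : X, ∃ r > 0, ∀ y ∈ Metric.ball x r, Nonempty (RectCurve X x y)) :
    ∀ x y : X, Nonempty (RectCurve X x y) := by
  classical
  intro x y
  set S := {z : X | Nonempty (RectCurve X x z)} with hS
  have hx : x ∈ S := ⟨RectCurve.refl x⟩
  have hopen : IsOpen S := by
    rw [Metric.isOpen_iff]
    intro z hz
    obtain ⟨r, hr, hcur⟩ := h z
    exact ⟨r, hr, fun w hw => ⟨hz.some.trans (hcur w hw).some⟩⟩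
  have hclosed : IsClosed S := by
    rw [← isOpen_compl_iff, Metric.isOpen_iff]
    intro z hz
    obtain ⟨r, hr, hcur⟩ := h z
    refine ⟨r, hr, fun w hw hwS => hz ?_⟩
    exact ⟨hwS.some.trans (hcur w hw).some.reverse⟩
  have huniv : S = Set.univ := by
    rcases (isClopen_iff.mp ⟨hclosed, hopen⟩) with h0 | h1
    · exact absurd (h0 ▸ hx) (Set.notMem_empty x)
    · exact h1
  have : y ∈ S := huniv ▸ Set.mem_univ y
  exact this
end

section
/- Let (X,d) be a pointwise quasiconvex metric space, x,y ∈ X, and let A be a closed path-separating set between x and y with min{d(x,A), d(y,A)} > 0. Then there exists a topological separating set Ω from x to y with ∂Ω ⊆ A. Concretely, Ω can be taken as the closure of the set of points z reachable from x by a rectifiable curve avoiding A. -/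
open MeasureTheory Metric Set Filter
open scoped ENNReal NNReal

noncomputable section
namespace Aux
variable {X : Type*} [MetricSpace X] {x y z w : X}

lemma dist_le' (c : RectCurve X x y) {s t : ℝ} (hs : s ∈ Set.Icc 0 c.T)
    (ht : t ∈ Set.Icc 0 c.T) : dist (c.toFun s) (c.toFun t) ≤ dist s t := by
  have h := (lipschitzOnWith_iff_dist_le_mul.1 c.lip) s hs t ht
  simpa using h

lemma dist_source_le (c : RectCurve X x y) {t : ℝ} (ht : t ∈ Set.Icc 0 c.T) :
    dist (c.toFun t) x ≤ c.T := by
  have h := dist_le' c ht ⟨le_refl 0, c.T_nonneg⟩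
  rw [c.source] at h
  calc dist (c.toFun t) x ≤ dist t 0 := h
    _ = t := by rw [Real.dist_eq, sub_zero, abs_of_nonneg ht.1]
    _ ≤ c.T := ht.2

def const (x : X) : RectCurve X x x where
  T := 0
  T_nonneg := le_refl 0
  toFun := fun _ => x
  lip := lipschitzOnWith_iff_dist_le_mul.2 (by intro a _ b _; simpa using dist_nonneg)
  source := rfl
  target := rfl

def reverse (c : RectCurve X x y) : RectCurve X y x where
  T := c.T
  T_nonneg := c.T_nonneg
  toFun := fun t => c.toFun (c.T - t)
  lip := by
    rw [lipschitzOnWith_iff_dist_le_mul]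
    intro a ha b hb
    have h := dist_le' c (s := c.T - a) (t := c.T - b)
      ⟨by linarith [ha.2], by linarith [ha.1]⟩ ⟨by linarith [hb.2], by linarith [hb.1]⟩
    calc dist (c.toFun (c.T - a)) (c.toFun (c.T - b)) ≤ dist (c.T - a) (c.T - b) := h
      _ = dist a b := dist_sub_left _ _ _
      _ ≤ 1 * dist a b := by simp
  source := by simpa using c.target
  target := by simpa using c.source

def concat (c1 : RectCurve X x z) (c2 : RectCurve X z w) : RectCurve X x w where
  T := c1.T + c2.T
  T_nonneg := add_nonneg c1.T_nonneg c2.T_nonneg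
  toFun := fun t => if t ≤ c1.T then c1.toFun t else c2.toFun (t - c1.T)
  lip := by
    rw [lipschitzOnWith_iff_dist_le_mul]
    have key : ∀ a ∈ Set.Icc (0:ℝ) (c1.T + c2.T), ∀ b ∈ Set.Icc (0:ℝ) (c1.T + c2.T),
        a ≤ b → dist (if a ≤ c1.T then c1.toFun a else c2.toFun (a - c1.T))
          (if b ≤ c1.T then c1.toFun b else c2.toFun (b - c1.T)) ≤ dist a b := by
      intro a ha b hb hab
      by_cases h1 : a ≤ c1.T <;> by_cases h2 : b ≤ c1.T
      · simp only [if_pos h1, if_pos h2]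
        exact dist_le' c1 ⟨ha.1, h1⟩ ⟨hb.1, h2⟩
      · simp only [if_pos h1, if_neg h2]
        push_neg at h2
        have hd1 : dist (c1.toFun a) (c1.toFun c1.T) ≤ c1.T - a := by
          have := dist_le' c1 (s := a) (t := c1.T) ⟨ha.1, h1⟩ ⟨c1.T_nonneg, le_refl _⟩
          rwa [Real.dist_eq, abs_of_nonpos (by linarith), neg_sub] at this
        have hd2 : dist (c2.toFun 0) (c2.toFun (b - c1.T)) ≤ b - c1.T := by
          have := dist_le' c2 (s := (0:ℝ)) (t := b - c1.T)
            ⟨le_refl 0, c2.T_nonneg⟩ ⟨by linarith, by linarith [hb.2]⟩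
          rwa [Real.dist_eq, zero_sub, abs_neg, abs_of_nonneg (by linarith)] at this
        calc dist (c1.toFun a) (c2.toFun (b - c1.T))
            ≤ dist (c1.toFun a) (c1.toFun c1.T) + dist (c1.toFun c1.T) (c2.toFun (b - c1.T)) :=
              dist_triangle _ _ _
          _ = dist (c1.toFun a) (c1.toFun c1.T) + dist (c2.toFun 0) (c2.toFun (b - c1.T)) := by
              rw [c1.target, c2.source]
          _ ≤ (c1.T - a) + (b - c1.T) := add_le_add hd1 hd2
          _ = b - a := by ring
          _ ≤ dist a b := by rw [Real.dist_eq, abs_sub_comm]; exact le_abs_self _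
      · linarith
      · simp only [if_neg h1, if_neg h2]
        push_neg at h1
        have := dist_le' c2 (s := a - c1.T) (t := b - c1.T)
          ⟨by linarith, by linarith [ha.2]⟩ ⟨by linarith, by linarith [hb.2]⟩
        calc dist (c2.toFun (a - c1.T)) (c2.toFun (b - c1.T)) ≤ dist (a - c1.T) (b - c1.T) := this
          _ = dist a b := by
              rw [Real.dist_eq, Real.dist_eq]; congr 1; ring
    intro a ha b hb
    rcases le_total a b with hab | hab
    · simpa using key a ha b hb hab
    · rw [dist_comm, dist_comm a b]
      simpa using key b hb a ha hab
  source := by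
    simp only [if_pos c1.T_nonneg]; exact c1.source
  target := by
    by_cases h : c1.T + c2.T ≤ c1.T
    · have h2 : c2.T = 0 := le_antisymm (by linarith) c2.T_nonneg
      simp only [if_pos h]
      have : c1.T + c2.T = c1.T := by rw [h2, add_zero]
      rw [this, c1.target]
      have := c2.target
      rw [h2] at this
      rw [← this, c2.source]
    · simp only [if_neg h, add_sub_cancel_left, c2.target]

lemma concat_avoid {A : Set X} (c1 : RectCurve X x z) (c2 : RectCurve X z w)
    (h1 : ∀ t ∈ Set.Icc 0 c1.T, c1.toFun t ∉ A)
    (h2 : ∀ t ∈ Set.Icc 0 c2.T, c2.toFun t ∉ A) :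
    ∀ t ∈ Set.Icc 0 (concat c1 c2).T, (concat c1 c2).toFun t ∉ A := by
  intro t ht
  show (if t ≤ c1.T then c1.toFun t else c2.toFun (t - c1.T)) ∉ A
  by_cases h : t ≤ c1.T
  · rw [if_pos h]; exact h1 t ⟨ht.1, h⟩
  · rw [if_neg h]
    push_neg at h
    exact h2 _ ⟨by linarith, by have := ht.2; simp only [concat] at this; linarith⟩

lemma reverse_avoid {A : Set X} (c : RectCurve X x y)
    (h : ∀ t ∈ Set.Icc 0 c.T, c.toFun t ∉ A) :
    ∀ t ∈ Set.Icc 0 (reverse c).T, (reverse c).toFun t ∉ A := by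
  intro t ht
  exact h (c.T - t) ⟨by have := ht.2; simp only [reverse] at this ⊢; linarith,
    by have := ht.1; linarith⟩

lemma short_avoid {A : Set X} (c : RectCurve X z w) (h : c.T < Metric.infDist z A) :
    ∀ t ∈ Set.Icc 0 c.T, c.toFun t ∉ A := by
  intro t ht hmem
  have h1 : Metric.infDist z A ≤ dist z (c.toFun t) := Metric.infDist_le_dist_of_mem hmem
  have h2 : dist (c.toFun t) z ≤ c.T := dist_source_le c ht
  rw [dist_comm] at h1
  linarith

end Aux
end

theorem stmt3 {X : Type*} [MetricSpace X]
    (hpq : ∀ z : X, ∃ r > 0, ∃ Λ : ℝ, 1 ≤ Λ ∧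
      ∀ w ∈ Metric.ball z r, ∃ c : RectCurve X z w, c.T ≤ Λ * dist z w)
    (x y : X) (A : Set X) (hA : IsClosed A) (hsep : IsPathSep x y A)
    (hx : 0 < Metric.infDist x A) (hy : 0 < Metric.infDist y A) :
    ∃ Ω : Set X, IsSepSet x y Ω ∧ frontier Ω ⊆ A ∧
      Ω = closure {z : X | ∃ c : RectCurve X x z, ∀ t ∈ Set.Icc 0 c.T, c.toFun t ∉ A} := by
  classical
  have hAne : A.Nonempty := by
    by_contra h
    rw [Set.not_nonempty_iff_eq_empty] at h
    rw [h, Metric.infDist_empty] at hx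
    exact lt_irrefl 0 hx
  have notmem_iff : ∀ z : X, z ∉ A ↔ 0 < Metric.infDist z A := fun z =>
    hA.notMem_iff_infDist_pos hAne
  set S := {z : X | ∃ c : RectCurve X x z, ∀ t ∈ Set.Icc 0 c.T, c.toFun t ∉ A} with hSdef
  have key : ∀ z : X, z ∉ A → ∃ ε > 0, ∀ w ∈ Metric.ball z ε,
      ∃ c : RectCurve X z w, ∀ t ∈ Set.Icc 0 c.T, c.toFun t ∉ A := by
    intro z hz
    obtain ⟨r, hr, Λ, hΛ, hcur⟩ := hpq z
    have hdz : 0 < Metric.infDist z A := (notmem_iff z).1 hz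
    have hΛ0 : (0:ℝ) < Λ := lt_of_lt_of_le one_pos hΛ
    refine ⟨min r (Metric.infDist z A / (2*Λ)), lt_min hr (by positivity), ?_⟩
    intro w hw
    rw [Metric.mem_ball] at hw
    obtain ⟨c, hc⟩ := hcur w (Metric.mem_ball.2 (lt_of_lt_of_le hw (min_le_left _ _)))
    refine ⟨c, Aux.short_avoid c ?_⟩
    have h1 : dist z w < Metric.infDist z A / (2*Λ) := by
      rw [dist_comm]; exact lt_of_lt_of_le hw (min_le_right _ _)
    calc c.T ≤ Λ * dist z w := hc
      _ < Λ * (Metric.infDist z A / (2*Λ)) := mul_lt_mul_of_pos_left h1 hΛ0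
      _ = Metric.infDist z A / 2 := by field_simp
      _ < Metric.infDist z A := by linarith
  have hSopen : IsOpen S := by
    rw [Metric.isOpen_iff]
    intro z hz
    obtain ⟨c0, hc0⟩ := hz
    have hzA : z ∉ A := by
      have := hc0 c0.T ⟨c0.T_nonneg, le_refl _⟩; rwa [c0.target] at this
    obtain ⟨ε, hε, hball⟩ := key z hzA
    refine ⟨ε, hε, fun w hw => ?_⟩
    obtain ⟨c, hc⟩ := hball w hw
    exact ⟨Aux.concat c0 c, Aux.concat_avoid c0 c hc0 hc⟩
  have hxS : x ∈ S := ⟨Aux.const x, fun t _ hmem => ((notmem_iff x).2 hx) hmem⟩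
  have hyA : y ∉ A := (notmem_iff y).2 hy
  obtain ⟨εy, hεy, hbally⟩ := key y hyA
  have hydisj : ∀ w ∈ Metric.ball y εy, w ∉ S := by
    rintro w hw ⟨c0, hc0⟩
    obtain ⟨c, hc⟩ := hbally w hw
    obtain ⟨t, ht, hmem⟩ := hsep (Aux.concat c0 (Aux.reverse c))
    exact Aux.concat_avoid c0 (Aux.reverse c) hc0 (Aux.reverse_avoid c hc) t ht hmem
  have hSsub : S ⊆ interior (closure S) := interior_maximal subset_closure hSopen
  obtain ⟨εx, hεx, hballx⟩ := Metric.isOpen_iff.1 hSopen x hxS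
  refine ⟨closure S, ⟨isClosed_closure, min εx εy, lt_min hεx hεy, ?_, ?_⟩, ?_, rfl⟩
  · exact fun w hw => hSsub (hballx (Metric.ball_subset_ball (min_le_left _ _) hw))
  · intro w hw
    simp only [Set.mem_compl_iff]
    intro hwc
    have hw' : w ∈ Metric.ball y εy := Metric.ball_subset_ball (min_le_right _ _) hw
    obtain ⟨v, hvS, hvd⟩ := Metric.mem_closure_iff.1 hwc (εy - dist y w)
      (by rw [Metric.mem_ball, dist_comm] at hw'; linarith)
    refine hydisj v ?_ hvS
    rw [Metric.mem_ball, dist_comm]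
    calc dist y v ≤ dist y w + dist w v := dist_triangle _ _ _
      _ < dist y w + (εy - dist y w) := by linarith
      _ = εy := by ring
  · intro z hz
    have h1 : z ∈ closure S := closure_closure (s := S) ▸ hz.1
    have h2 : z ∉ interior (closure S) := hz.2
    have hzS : z ∉ S := fun h => h2 (hSsub h)
    by_contra hzA
    obtain ⟨ε, hε, hball⟩ := key z hzA
    obtain ⟨b, hbS, hbd⟩ := Metric.mem_closure_iff.1 h1 ε hε
    obtain ⟨c, hc⟩ := hball b (by rw [Metric.mem_ball, dist_comm]; exact hbd)
    obtain ⟨c0, hc0⟩ := hbS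
    exact hzS ⟨Aux.concat c0 (Aux.reverse c),
      Aux.concat_avoid c0 (Aux.reverse c) hc0 (Aux.reverse_avoid c hc)⟩
end

section
/- Let (X,d,m) be a metric measure space, x,y ∈ X, and Ω a topological separating set from x to y with m(∂Ω) = 0. For 0 < r < min{d(∂Ω,x), d(∂Ω,y)}, every rectifiable curve γ from x to y spends length at least r in the closed annulus A_r := closure(B_r(Ω)) \ int(Ω); hence width_{x,y}(A_r) ≥ r. -/
open MeasureTheory Metric Set Filter
open scoped ENNReal NNReal

theorem stmt4 {X : Type*} [MetricSpace X] [MeasurableSpace X] [BorelSpace X] (m : MeasureTheory.Measure X) (x y : X)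
    (Ω : Set X) (hΩ : IsSepSet x y Ω) (hfr : m (frontier Ω) = 0)
    (r : ℝ) (hr : 0 < r)
    (hrx : r < Metric.infDist x (frontier Ω)) (hry : r < Metric.infDist y (frontier Ω)) :
    (∀ c : RectCurve X x y,
        ENNReal.ofReal r ≤ c.lengthIn (Metric.cthickening r Ω \ interior Ω)) ∧
      ENNReal.ofReal r ≤ width x y (Metric.cthickening r Ω \ interior Ω) := by
  obtain ⟨hclosed, ρ, hρ, hbx, hby⟩ := hΩ
  have hxΩ : x ∈ Ω := interior_subset (hbx (Metric.mem_ball_self hρ))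
  have hyΩ : y ∉ Ω := hby (Metric.mem_ball_self hρ)
  have main : ∀ c : RectCurve X x y,
      ENNReal.ofReal r ≤ c.lengthIn (Metric.cthickening r Ω \ interior Ω) := by
    intro c
    obtain ⟨T, hT, γ, hlip, hsrc, htgt⟩ := c
    simp only [RectCurve.lengthIn, RectCurve.lengthInUpTo]
    have hcont : ContinuousOn γ (Set.Icc 0 T) := hlip.continuousOn
    set S : Set ℝ := Set.Icc 0 T ∩ γ ⁻¹' Ω with hS
    have hSclosed : IsClosed S := hcont.preimage_isClosed_of_isClosed isClosed_Icc hclosed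
    have hSne : S.Nonempty := ⟨0, ⟨le_refl 0, hT⟩, by simpa [hsrc] using hxΩ⟩
    have hSbdd : BddAbove S := ⟨T, fun t ht => ht.1.2⟩
    set τ : ℝ := sSup S with hτdef
    have hτS : τ ∈ S := hSclosed.csSup_mem hSne hSbdd
    have hτ0 : 0 ≤ τ := hτS.1.1
    have hτT : τ ≤ T := hτS.1.2
    have hγτ : γ τ ∈ Ω := hτS.2
    have hτltT : τ < T := by
      rcases lt_or_eq_of_le hτT with h | h
      · exact h
      · exact absurd (h ▸ hγτ) (htgt ▸ hyΩ)
    have hafter : ∀ t, τ < t → t ≤ T → γ t ∉ Ω := by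
      intro t ht htT hmem
      exact absurd (le_csSup hSbdd ⟨⟨hτ0.trans ht.le, htT⟩, hmem⟩) (not_le.2 ht)
    -- γ τ ∈ frontier Ω
    have hclos : γ τ ∈ closure Ωᶜ := by
      have hne : (nhdsWithin τ (Set.Ioo τ T)).NeBot := by
        rw [← mem_closure_iff_nhdsWithin_neBot, closure_Ioo hτltT.ne]
        exact ⟨le_refl τ, hτltT.le⟩
      have htend : Filter.Tendsto γ (nhdsWithin τ (Set.Ioo τ T)) (nhds (γ τ)) :=
        (hcont τ hτS.1).mono_left
          (nhdsWithin_mono τ (fun t ht => ⟨hτ0.trans ht.1.le, ht.2.le⟩))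
      refine mem_closure_of_tendsto htend ?_
      filter_upwards [self_mem_nhdsWithin] with t ht
      exact hafter t ht.1 ht.2.le
    have hfront : γ τ ∈ frontier Ω := by
      rw [frontier_eq_closure_inter_closure, hclosed.closure_eq]
      exact ⟨hγτ, hclos⟩
    -- τ + r ≤ T
    have hdist : dist y (γ τ) ≤ T - τ := by
      have := hlip.dist_le_mul T ⟨hT, le_refl T⟩ τ hτS.1
      rw [htgt] at this
      simpa [abs_of_nonneg (sub_nonneg.2 hτT), Real.dist_eq] using this
    have hτr : τ + r ≤ T := by
      have h1 : r < dist y (γ τ) := hry.trans_le (Metric.infDist_le_dist_of_mem hfront)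
      linarith
    -- the interval [τ, τ+r] is inside the annulus time set
    have hsub : Set.Icc τ (τ + r) ⊆
        {t : ℝ | t ∈ Set.Icc 0 (min T T) ∧ γ t ∈ Metric.cthickening r Ω \ interior Ω} := by
      intro t ht
      have ht0 : 0 ≤ t := hτ0.trans ht.1
      have htT : t ≤ T := ht.2.trans hτr
      refine ⟨by simpa using ⟨ht0, htT⟩, ?_, ?_⟩
      · refine Metric.mem_cthickening_of_dist_le (γ t) (γ τ) r Ω hγτ ?_
        have := hlip.dist_le_mul t ⟨ht0, htT⟩ τ hτS.1
        rw [Real.dist_eq, abs_of_nonneg (sub_nonneg.2 ht.1)] at this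
        have h2 : dist (γ t) (γ τ) ≤ t - τ := by simpa using this
        linarith [ht.2]
      · rcases eq_or_lt_of_le ht.1 with h | h
        · rw [← h]
          rw [closure_compl] at hclos
          exact hclos
        · exact fun hint => hafter t h htT (interior_subset hint)
    calc ENNReal.ofReal r = volume (Set.Icc τ (τ + r)) := by
            rw [Real.volume_Icc]; ring_nf
      _ ≤ _ := measure_mono hsub
  exact ⟨main, le_iInf main⟩
end

section
/- Let (X,d,m) be a metric measure space with m finite, x,y ∈ X, and suppose there exist c > 0 such that every topological separating set Ω from x to y satisfies m^+(Ω) ≥ c, where m^+ is the Minkowski content. Then for every Lipschitz function u: X → ℝ one has c·|u(x) − u(y)| ≤ ∫_X lip u dm. -/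
open MeasureTheory Metric Set Filter
open scoped ENNReal NNReal

open scoped Topology

/-!
If `u(y) < u(x)`, every superlevel set `{u ≥ t}` with `u(y) < t < u(x)` separates `x` from `y`,
so `c |u(x) - u(y)|` is at most the integral over `t` of the Minkowski content of `{u ≥ t}`.
That integral is bounded by `∫ lip u dm` (coarea inequality): a point within distance `r` of
`{u ≥ t}` but outside it satisfies `u < t ≤ u + r L_ρ` for any `ρ > r`, where `L_ρ` is the
supremum of the difference quotients of `u` over the punctured `ρ`-ball, and by Fubini the
layers `{u < t ≤ u + r L_ρ}` have total measure `r ∫ L_ρ dm`. Fatou's lemma lets `r → 0`, and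
monotone convergence lets `ρ → 0`, which turns `L_ρ` into `lip u`.
-/

noncomputable def slopeSup {X : Type*} [MetricSpace X] (u : X → ℝ) (r : ℝ) (z : X) : ℝ≥0∞ :=
  ⨆ w ∈ ball z r ∩ {z}ᶜ, ENNReal.ofReal (|u w - u z| / dist w z)

section Slope

variable {X : Type*} [MetricSpace X] {u : X → ℝ}

lemma lipConst_eq_iInf_slopeSup (u : X → ℝ) (z : X) :
    lipConst u z = ⨅ n : ℕ, slopeSup u (1 / (n + 1)) z := by
  rw [lipConst, (nhdsWithin_hasBasis nhds_basis_ball_inv_nat_succ _).limsup_eq_iInf_iSup]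
  simp only [iInf_true, slopeSup]

lemma lipConst_neg (u : X → ℝ) : lipConst (-u) = lipConst u := by
  funext z
  simp_rw [lipConst, Pi.neg_apply, neg_sub_neg, abs_sub_comm (u z)]

lemma slopeSup_mono (u : X → ℝ) (z : X) : Monotone fun r => slopeSup u r z :=
  fun _ _ hrr' => biSup_mono fun _ hw => ⟨ball_subset_ball hrr' hw.1, hw.2⟩

lemma slopeSup_le_of_lipschitzWith {K : ℝ≥0} (hu : LipschitzWith K u) (r : ℝ) (z : X) :
    slopeSup u r z ≤ K :=
  iSup₂_le fun w _ => ENNReal.ofReal_le_of_le_toReal <|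
    div_le_of_le_mul₀ dist_nonneg K.coe_nonneg (by simpa [Real.dist_eq] using hu.dist_le_mul w z)

lemma slopeSup_ne_top_of_lipschitzWith {K : ℝ≥0} (hu : LipschitzWith K u) (r : ℝ) (z : X) :
    slopeSup u r z ≠ ⊤ :=
  ne_top_of_le_ne_top ENNReal.coe_ne_top (slopeSup_le_of_lipschitzWith hu r z)

lemma sub_le_slopeSup_mul_dist {r : ℝ} {z w : X} (hfin : slopeSup u r z ≠ ⊤) (hw : w ∈ ball z r) :
    u w - u z ≤ (slopeSup u r z).toReal * dist w z := by
  rcases eq_or_ne w z with rfl | hwz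
  · simp
  have hquot : |u w - u z| / dist w z ≤ (slopeSup u r z).toReal :=
    (ENNReal.ofReal_le_iff_le_toReal hfin).1 <|
      le_iSup₂ (f := fun w _ => ENNReal.ofReal (|u w - u z| / dist w z)) w ⟨hw, hwz⟩
  rw [div_le_iff₀ (dist_pos.2 hwz)] at hquot
  exact (le_abs_self _).trans hquot

lemma lowerSemicontinuous_slopeSup (hu : Continuous u) (r : ℝ) :
    LowerSemicontinuous (slopeSup u r) := by
  intro z a ha
  obtain ⟨w, ⟨hwr, hwz⟩, hwa⟩ := lt_biSup_iff.1 ha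
  have hquot : ContinuousAt (fun z' => ENNReal.ofReal (|u w - u z'| / dist w z')) z := by
    refine ENNReal.continuous_ofReal.continuousAt.comp ?_
    exact (continuous_const.sub hu).abs.continuousAt.div
      (continuous_const.dist continuous_id).continuousAt (dist_ne_zero.2 hwz)
  have hnear : ∀ᶠ z' in 𝓝 z, w ∈ ball z' r ∩ {z'}ᶜ :=
    ((isOpen_lt (continuous_const.dist continuous_id) continuous_const).inter
      (isOpen_ne_fun continuous_const continuous_id)).mem_nhds ⟨hwr, hwz⟩
  filter_upwards [hquot.eventually_const_lt hwa, hnear] with z' hz' hw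
  exact hz'.trans_le (le_iSup₂ (f := fun w _ => ENNReal.ofReal (|u w - u z'| / dist w z')) w hw)

lemma cthickening_superlevel_diff_subset {K : ℝ≥0} (hu : LipschitzWith K u) {r r' : ℝ}
    (hr : 0 ≤ r) (hrr' : r < r') (t : ℝ) :
    cthickening r {z | t ≤ u z} \ {z | t ≤ u z} ⊆
      {z | u z < t ∧ t ≤ u z + (slopeSup u r' z).toReal * r} := by
  rintro z ⟨hz, hzt⟩
  have hzt : u z < t := not_le.1 hzt
  refine ⟨hzt, ?_⟩
  set L := (slopeSup u r' z).toReal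
  have hbound : ∀ s ∈ Ioo r r', t - u z ≤ L * s := by
    rintro s ⟨hrs, hsr'⟩
    obtain ⟨w, hwt, hzw⟩ :=
      mem_thickening_iff.1 (cthickening_subset_thickening' (hr.trans_lt hrs) hrs _ hz)
    rw [dist_comm] at hzw
    calc t - u z ≤ u w - u z := by linarith [show t ≤ u w from hwt]
      _ ≤ L * dist w z := sub_le_slopeSup_mul_dist (slopeSup_ne_top_of_lipschitzWith hu r' z)
          (mem_ball.2 (hzw.trans hsr'))
      _ ≤ L * s := mul_le_mul_of_nonneg_left hzw.le ENNReal.toReal_nonneg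
  have hlim : t - u z ≤ L * r :=
    ge_of_tendsto (((continuous_const.mul continuous_id).tendsto r).mono_left nhdsWithin_le_nhds)
      (eventually_of_mem (Ioo_mem_nhdsGT hrr') hbound)
  linarith

end Slope

lemma lintegral_measure_between_graphs {X : Type*} [MeasurableSpace X] (m : Measure X)
    [SFinite m] {u g : X → ℝ} (hu : Measurable u) (hg : Measurable g) :
    ∫⁻ t, m {z | u z < t ∧ t ≤ u z + g z} = ∫⁻ z, ENNReal.ofReal (g z) ∂m := by
  have hA : MeasurableSet {p : X × ℝ | u p.1 < p.2 ∧ p.2 ≤ u p.1 + g p.1} :=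
    (measurableSet_lt (hu.comp measurable_fst) measurable_snd).inter
      (measurableSet_le measurable_snd ((hu.comp measurable_fst).add (hg.comp measurable_fst)))
  calc ∫⁻ t, m {z | u z < t ∧ t ≤ u z + g z}
      = m.prod volume {p : X × ℝ | u p.1 < p.2 ∧ p.2 ≤ u p.1 + g p.1} :=
        (Measure.prod_apply_symm hA).symm
    _ = ∫⁻ z, volume (Ioc (u z) (u z + g z)) ∂m := Measure.prod_apply hA
    _ = ∫⁻ z, ENNReal.ofReal (g z) ∂m := by simp only [Real.volume_Ioc, add_sub_cancel_left]

lemma measurable_measure_cthickening_diff {X : Type*} [MetricSpace X] [MeasurableSpace X]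
    (m : Measure X) [IsFiniteMeasure m] {s : ℝ → Set X} (hs : Antitone s)
    (hsm : ∀ t, MeasurableSet (s t)) (r : ℝ) :
    Measurable fun t => m (cthickening r (s t) \ s t) := by
  simp_rw [measure_sdiff (self_subset_cthickening _) (hsm _).nullMeasurableSet
    (measure_ne_top m _)]
  have hthick : Antitone fun t => m (cthickening r (s t)) :=
    fun _ _ h => measure_mono (cthickening_subset_of_subset r (hs h))
  have hset : Antitone fun t => m (s t) := fun _ _ h => measure_mono (hs h)
  exact hthick.measurable.sub hset.measurable

section Coarea

variable {X : Type*} [MetricSpace X] [MeasurableSpace X] [BorelSpace X] (m : Measure X)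
  {u : X → ℝ} {K : ℝ≥0}

lemma lintegral_measure_cthickening_superlevel_diff_le [SFinite m] (hu : LipschitzWith K u)
    {r r' : ℝ} (hr : 0 ≤ r) (hrr' : r < r') :
    ∫⁻ t, m (cthickening r {z | t ≤ u z} \ {z | t ≤ u z}) ≤
      (∫⁻ z, slopeSup u r' z ∂m) * ENNReal.ofReal r :=
  calc ∫⁻ t, m (cthickening r {z | t ≤ u z} \ {z | t ≤ u z})
      ≤ ∫⁻ t, m {z | u z < t ∧ t ≤ u z + (slopeSup u r' z).toReal * r} :=
        lintegral_mono fun t => measure_mono (cthickening_superlevel_diff_subset hu hr hrr' t)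
    _ = ∫⁻ z, ENNReal.ofReal ((slopeSup u r' z).toReal * r) ∂m :=
        lintegral_measure_between_graphs m hu.continuous.measurable
          ((lowerSemicontinuous_slopeSup hu.continuous r').measurable.ennreal_toReal.mul_const r)
    _ = ∫⁻ z, slopeSup u r' z * ENNReal.ofReal r ∂m := by
        refine lintegral_congr fun z => ?_
        rw [ENNReal.ofReal_mul ENNReal.toReal_nonneg,
          ENNReal.ofReal_toReal (slopeSup_ne_top_of_lipschitzWith hu r' z)]
    _ = (∫⁻ z, slopeSup u r' z ∂m) * ENNReal.ofReal r :=
        lintegral_mul_const' _ _ ENNReal.ofReal_ne_top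

lemma lintegral_mink_superlevel_le_lintegral_slopeSup [IsFiniteMeasure m]
    (hu : LipschitzWith K u) {r' : ℝ} (hr' : 0 < r') :
    ∫⁻ t, mink m {z | t ≤ u z} ≤ ∫⁻ z, slopeSup u r' z ∂m := by
  set G : ℝ → ℝ → ℝ≥0∞ := fun r t =>
    m (cthickening r {z | t ≤ u z} \ {z | t ≤ u z}) / ENNReal.ofReal r
  have hG : ∀ r, Measurable (G r) := fun r =>
    (measurable_measure_cthickening_diff m (s := fun t => {z | t ≤ u z})
      (fun _ _ h _ hz => h.trans hz)
      (fun _ => measurableSet_le measurable_const hu.continuous.measurable) r).div_const _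
  have hGint : ∀ r ∈ Ioo 0 r', ∫⁻ t, G r t ≤ ∫⁻ z, slopeSup u r' z ∂m := by
    rintro r ⟨hr, hrr'⟩
    simp only [G, div_eq_mul_inv]
    rw [lintegral_mul_const' _ _ (ENNReal.inv_ne_top.2 (ENNReal.ofReal_pos.2 hr).ne'),
      ← div_eq_mul_inv]
    exact ENNReal.div_le_of_le_mul
      (lintegral_measure_cthickening_superlevel_diff_le m hu hr.le hrr')
  calc ∫⁻ t, mink m {z | t ≤ u z} = ∫⁻ t, liminf (fun r => G r t) (𝓝[>] 0) := rfl
    _ ≤ liminf (fun r => ∫⁻ t, G r t) (𝓝[>] 0) := lintegral_liminf_le hG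
    _ ≤ ∫⁻ z, slopeSup u r' z ∂m :=
        liminf_le_of_frequently_le' (eventually_of_mem (Ioo_mem_nhdsGT hr') hGint).frequently

theorem lintegral_mink_superlevel_le_lintegral_lipConst [IsFiniteMeasure m]
    (hu : LipschitzWith K u) :
    ∫⁻ t, mink m {z | t ≤ u z} ≤ ∫⁻ z, lipConst u z ∂m := by
  have hmeas : ∀ n : ℕ, Measurable (slopeSup u (1 / (n + 1))) := fun _ =>
    (lowerSemicontinuous_slopeSup hu.continuous _).measurable
  have hanti : Antitone fun n : ℕ => slopeSup u (1 / (n + 1)) := fun _ _ h z =>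
    slopeSup_mono u z (Nat.one_div_le_one_div h)
  have hfin : ∫⁻ z, slopeSup u (1 / ((0 : ℕ) + 1)) z ∂m ≠ ⊤ :=
    ne_top_of_le_ne_top (lintegral_const_lt_top (μ := m) ENNReal.coe_ne_top).ne
      (lintegral_mono fun z => slopeSup_le_of_lipschitzWith hu _ z)
  simp_rw [lipConst_eq_iInf_slopeSup]
  rw [lintegral_iInf hmeas hanti hfin]
  exact le_iInf fun n => lintegral_mink_superlevel_le_lintegral_slopeSup m hu Nat.one_div_pos_of_nat

end Coarea

lemma isSepSet_superlevel {X : Type*} [MetricSpace X] {u : X → ℝ} (hu : Continuous u)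
    {x y : X} {t : ℝ} (hy : u y < t) (hx : t < u x) : IsSepSet x y {z | t ≤ u z} := by
  obtain ⟨rx, hrx, hbx⟩ := Metric.isOpen_iff.1 (isOpen_lt continuous_const hu) x hx
  obtain ⟨ry, hry, hby⟩ := Metric.isOpen_iff.1 (isOpen_lt hu continuous_const) y hy
  refine ⟨isClosed_le continuous_const hu, min rx ry, lt_min hrx hry, ?_, ?_⟩
  · exact ((ball_subset_ball (min_le_left _ _)).trans hbx).trans
      (interior_maximal (fun z (hz : t < u z) => hz.le) (isOpen_lt continuous_const hu))
  · exact (ball_subset_ball (min_le_right _ _)).trans fun z hz =>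
      not_le.2 (show u z < t from hby hz)

theorem stmt5_general {X : Type*} [MetricSpace X] [MeasurableSpace X] [BorelSpace X] (m : MeasureTheory.Measure X)
    [MeasureTheory.IsFiniteMeasure m] (x y : X) (c : ℝ)
    (hmin : ∀ Ω : Set X, IsSepSet x y Ω → ENNReal.ofReal c ≤ mink m Ω)
    (u : X → ℝ) (hu : ∃ K : ℝ≥0, LipschitzWith K u) :
    ENNReal.ofReal (c * |u x - u y|) ≤ ∫⁻ z, lipConst u z ∂m := by
  obtain ⟨K, hK⟩ := hu
  wlog h : u y ≤ u x generalizing u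
  · have hneg := this (-u) hK.neg (neg_le_neg (le_of_not_ge h))
    rwa [lipConst_neg, Pi.neg_apply, Pi.neg_apply, neg_sub_neg, abs_sub_comm] at hneg
  calc ENNReal.ofReal (c * |u x - u y|) = ∫⁻ t in Ioo (u y) (u x), ENNReal.ofReal c := by
        rw [setLIntegral_const, Real.volume_Ioo, abs_of_nonneg (sub_nonneg.2 h),
          ENNReal.ofReal_mul' (sub_nonneg.2 h)]
    _ ≤ ∫⁻ t in Ioo (u y) (u x), mink m {z | t ≤ u z} := setLIntegral_mono' measurableSet_Ioo
        fun t ht => hmin _ (isSepSet_superlevel hK.continuous ht.1 ht.2)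
    _ ≤ ∫⁻ t, mink m {z | t ≤ u z} := setLIntegral_le_lintegral _ _
    _ ≤ ∫⁻ z, lipConst u z ∂m := lintegral_mink_superlevel_le_lintegral_lipConst m hK

theorem stmt5 {X : Type*} [MetricSpace X] [MeasurableSpace X] [BorelSpace X] (m : MeasureTheory.Measure X)
    [MeasureTheory.IsFiniteMeasure m] (x y : X) (c : ℝ) (hc : 0 < c)
    (hmin : ∀ Ω : Set X, IsSepSet x y Ω → ENNReal.ofReal c ≤ mink m Ω)
    (u : X → ℝ) (hu : ∃ K : ℝ≥0, LipschitzWith K u) :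
    ENNReal.ofReal (c * |u x - u y|) ≤ ∫⁻ z, lipConst u z ∂m :=
  stmt5_general m x y c hmin u hu
end

section
/- Let (X,d) be a metric space, x,y ∈ X, and A ⊆ X a closed path-separating set between x and y. For every rectifiable curve γ from x to y there exists a point z ∈ Im(γ) ∩ A with pos_A(z) ≥ width_{x,y}(A), where pos_A is the position function of A. In fact, z may be taken to be γ(s_max) with s_max the last parameter at which γ meets A. -/
open MeasureTheory Metric Set Filter
open scoped ENNReal NNReal

theorem stmt6 {X : Type*} [MetricSpace X] (x y : X) (A : Set X) (hA : IsClosed A)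
    (hsep : IsPathSep x y A) (c : RectCurve X x y) :
    c.toFun (sSup {s : ℝ | s ∈ Set.Icc 0 c.T ∧ c.toFun s ∈ A}) ∈ A ∧
      width x y A ≤
        posFn x y A (c.toFun (sSup {s : ℝ | s ∈ Set.Icc 0 c.T ∧ c.toFun s ∈ A})) := by
  set S : Set ℝ := {s : ℝ | s ∈ Set.Icc 0 c.T ∧ c.toFun s ∈ A} with hS
  have hSne : S.Nonempty := by
    obtain ⟨t, ht, htA⟩ := hsep c
    exact ⟨t, ht, htA⟩
  have hSbdd : BddAbove S := ⟨c.T, fun t ht => ht.1.2⟩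
  have hSclosed : IsClosed S := by
    have hcont : ContinuousOn c.toFun (Set.Icc 0 c.T) := c.lip.continuousOn
    have : S = Set.Icc 0 c.T ∩ c.toFun ⁻¹' A := by
      ext t; simp [hS, Set.mem_setOf_eq]
    rw [this]
    exact hcont.preimage_isClosed_of_isClosed isClosed_Icc hA
  have hsmS : sSup S ∈ S := hSclosed.csSup_mem hSne hSbdd
  set sm := sSup S with hsm
  have hsm0 : 0 ≤ sm := hsmS.1.1
  have hsmT : sm ≤ c.T := hsmS.1.2
  refine ⟨hsmS.2, ?_⟩
  -- Now prove width ≤ posFn at z = c.toFun sm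
  rw [posFn]
  refine le_iInf fun c' => le_iInf fun s => le_iInf fun hs => le_iInf fun heq => ?_
  -- build concatenation curve
  have hs0 : 0 ≤ s := hs.1
  have hsT' : s ≤ c'.T := hs.2
  set T'' : ℝ := s + (c.T - sm) with hT''
  have hT''nn : 0 ≤ T'' := by simp only [hT'']; linarith
  have hsT'' : s ≤ T'' := by simp only [hT'']; linarith
  set f : ℝ → X := fun t => if t ≤ s then c'.toFun t else c.toFun (t - s + sm) with hf
  -- the glue point
  have hglue : c'.toFun s = c.toFun sm := heq
  have key : ∀ a ∈ Set.Icc (0:ℝ) T'', ∀ b ∈ Set.Icc (0:ℝ) T'', a ≤ b →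
      dist (f a) (f b) ≤ b - a := by
    intro a ha b hb hab
    by_cases hbs : b ≤ s
    · have has : a ≤ s := le_trans hab hbs
      simp only [hf, if_pos has, if_pos hbs]
      have := c'.lip.dist_le_mul a ⟨ha.1, le_trans has hsT'⟩ b ⟨hb.1, le_trans hbs hsT'⟩
      rw [NNReal.coe_one, one_mul, Real.dist_eq, abs_of_nonpos (by linarith)] at this
      linarith
    · push_neg at hbs
      have hbmem : b - s + sm ∈ Set.Icc (0:ℝ) c.T := by
        constructor
        · linarith
        · have := hb.2; simp only [hT''] at this; linarith
      by_cases has : a ≤ s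
      · simp only [hf, if_pos has, if_neg (not_le.mpr hbs)]
        have h1 := c'.lip.dist_le_mul a ⟨ha.1, le_trans has hsT'⟩ s ⟨hs0, hsT'⟩
        rw [NNReal.coe_one, one_mul, Real.dist_eq, abs_of_nonpos (by linarith)] at h1
        have h2 := c.lip.dist_le_mul sm ⟨hsm0, hsmT⟩ (b - s + sm) hbmem
        rw [NNReal.coe_one, one_mul, Real.dist_eq, abs_of_nonpos (by linarith)] at h2
        calc dist (c'.toFun a) (c.toFun (b - s + sm))
            ≤ dist (c'.toFun a) (c'.toFun s) + dist (c'.toFun s) (c.toFun (b - s + sm)) :=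
              dist_triangle _ _ _
          _ ≤ (s - a) + dist (c'.toFun s) (c.toFun (b - s + sm)) := by linarith
          _ = (s - a) + dist (c.toFun sm) (c.toFun (b - s + sm)) := by rw [hglue]
          _ ≤ (s - a) + (b - s + sm - sm) := by linarith
          _ = b - a := by ring
      · push_neg at has
        have hamem : a - s + sm ∈ Set.Icc (0:ℝ) c.T := by
          constructor
          · linarith
          · have := ha.2; simp only [hT''] at this; linarith
        simp only [hf, if_neg (not_le.mpr hbs), if_neg (not_le.mpr has)]
        have h2 := c.lip.dist_le_mul (a - s + sm) hamem (b - s + sm) hbmem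
        rw [NNReal.coe_one, one_mul, Real.dist_eq, abs_of_nonpos (by linarith)] at h2
        linarith
  have hflip : LipschitzOnWith 1 f (Set.Icc 0 T'') := by
    rw [lipschitzOnWith_iff_dist_le_mul]
    intro a ha b hb
    rw [NNReal.coe_one, one_mul, Real.dist_eq]
    rcases le_total a b with h | h
    · rw [abs_of_nonpos (by linarith)]
      have := key a ha b hb h; linarith
    · rw [abs_of_nonneg (by linarith), dist_comm]
      have := key b hb a ha h; linarith
  set c'' : RectCurve X x y :=
    { T := T''
      T_nonneg := hT''nn
      toFun := f
      lip := hflip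
      source := by simp only [hf, if_pos hs0, c'.source]
      target := by
        by_cases h : T'' ≤ s
        · have hTsm : c.T = sm := by simp only [hT''] at h; linarith
          have hT''s : T'' = s := le_antisymm h hsT''
          simp only [hf, if_pos h, hT''s, hglue, ← hTsm, c.target]
          simp
        · simp only [hf, if_neg h]
          have : T'' - s + sm = c.T := by simp only [hT'']; ring
          rw [this, c.target] } with hc''
  refine le_trans (iInf_le _ c'') ?_
  -- lengthIn c'' A ≤ lengthInUpTo c' A s
  have hsub : {t : ℝ | t ∈ Set.Icc 0 (min c''.T c''.T) ∧ c''.toFun t ∈ A} ⊆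
      {t : ℝ | t ∈ Set.Icc 0 (min s c'.T) ∧ c'.toFun t ∈ A} := by
    intro t ⟨⟨ht0, htT⟩, htA⟩
    rw [min_self] at htT
    by_cases hts : t ≤ s
    · refine ⟨⟨ht0, le_min hts (le_trans hts hsT')⟩, ?_⟩
      simpa only [hc'', hf, if_pos hts] using htA
    · exfalso
      push_neg at hts
      simp only [hc'', hf, if_neg (not_le.mpr hts)] at htA
      have hmem : t - s + sm ∈ S := by
        refine ⟨⟨by linarith, ?_⟩, htA⟩
        linarith
      have : t - s + sm ≤ sm := le_csSup hSbdd hmem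
      linarith
  exact measure_mono hsub
end

section
/- Let (X,d) be a metric space, x,y ∈ X, and A ⊆ X a closed path-separating set between x and y. For every rectifiable curve γ from x to y, the function τ ↦ pos_A((γ ∩ A)_τ) is 1-Lipschitz on [0, ℓ(γ ∩ A)]: |pos_A((γ ∩ A)_{τ1}) − pos_A((γ ∩ A)_{τ2})| ≤ |τ1 − τ2|. -/
open MeasureTheory Metric Set Filter
open scoped ENNReal NNReal

/-!
To reach `(γ ∩ A)_{τ₁}`, follow a nearly optimal curve to `(γ ∩ A)_{τ₂}`, then run along `γ`
(backwards if necessary) from the parameter of the second point to that of the first, and finish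
along `γ` to `y`. The extra length spent in `A` is that of `γ ∩ A` between the two parameters,
which is exactly `|τ₁ - τ₂|`: `s ↦ ℓ(γ ∩ A, s)` is continuous, so the first parameter reaching
level `τ` attains it.
-/

theorem LipschitzOnWith.ite_le {X : Type*} [PseudoMetricSpace X] {f g : ℝ → X} {K : ℝ≥0}
    {a b d : ℝ} (hf : LipschitzOnWith K f (Icc a b)) (hg : LipschitzOnWith K g (Icc b d))
    (hfg : f b = g b) :
    LipschitzOnWith K (fun t => if t ≤ b then f t else g t) (Icc a d) := by
  rw [lipschitzOnWith_iff_dist_le_mul] at hf hg ⊢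
  have key : ∀ u ∈ Icc a d, ∀ v ∈ Icc a d, u ≤ v →
      dist (if u ≤ b then f u else g u) (if v ≤ b then f v else g v) ≤ K * dist u v := by
    intro u hu v hv huv
    by_cases hvb : v ≤ b
    · rw [if_pos (huv.trans hvb), if_pos hvb]
      exact hf u ⟨hu.1, huv.trans hvb⟩ v ⟨hv.1, hvb⟩
    by_cases hub : u ≤ b
    · rw [if_pos hub, if_neg hvb]
      replace hvb := not_le.mp hvb
      calc dist (f u) (g v) ≤ dist (f u) (f b) + dist (g b) (g v) := hfg ▸ dist_triangle _ _ _
        _ ≤ K * dist u b + K * dist b v :=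
          add_le_add (hf u ⟨hu.1, hub⟩ b ⟨hu.1.trans hub, le_rfl⟩)
            (hg b ⟨le_rfl, hvb.le.trans hv.2⟩ v ⟨hvb.le, hv.2⟩)
        _ = K * dist u v := by
          rw [← mul_add, Real.dist_eq, Real.dist_eq, Real.dist_eq, abs_of_nonpos (by linarith),
            abs_of_nonpos (by linarith), abs_of_nonpos (by linarith)]
          ring
    · rw [if_neg hub, if_neg hvb]
      replace hub := not_le.mp hub
      exact hg u ⟨hub.le, hu.2⟩ v ⟨hub.le.trans huv, hv.2⟩
  intro u hu v hv
  rcases le_total u v with huv | hvu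
  · exact key u hu v hv huv
  · rw [dist_comm, dist_comm u]
    exact key v hv u hu hvu

theorem Isometry.volume_image {φ : ℝ → ℝ} (hφ : Isometry φ) (E : Set ℝ) :
    volume (φ '' E) = volume E := by
  rw [← hausdorffMeasure_real, hφ.hausdorffMeasure_image (Or.inl zero_le_one)]

namespace RectCurve

variable {X : Type*} [MetricSpace X] {x y : X}

def timesIn (c : RectCurve X x y) (A : Set X) : Set ℝ :=
  Icc 0 c.T ∩ c.toFun ⁻¹' A

/-- The paper's `(γ ∩ A)_τ` is `c.toFun (c.hittingTime A (ENNReal.ofReal τ))`. -/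
noncomputable def hittingTime (c : RectCurve X x y) (A : Set X) (r : ℝ≥0∞) : ℝ :=
  sInf {s | s ∈ Icc 0 c.T ∧ r ≤ c.lengthInUpTo A s}

variable (c : RectCurve X x y) (A : Set X)

theorem lengthInUpTo_eq_volume (s : ℝ) :
    c.lengthInUpTo A s = volume (c.timesIn A ∩ Iic s) := by
  simp only [lengthInUpTo, timesIn]
  congr 1
  ext t
  simp only [mem_ofPred_eq, mem_inter_iff, mem_Icc, mem_preimage, mem_Iic, le_min_iff]
  tauto

theorem lengthInUpTo_add_volume_Ioc {a b : ℝ} (hab : a ≤ b) :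
    c.lengthInUpTo A a + volume (c.timesIn A ∩ Ioc a b) = c.lengthInUpTo A b := by
  rw [lengthInUpTo_eq_volume, lengthInUpTo_eq_volume,
    ← measure_inter_add_sdiff (c.timesIn A ∩ Iic b) measurableSet_Iic, inter_assoc,
    Iic_inter_Iic, min_eq_right hab, inter_sdiff_assoc, Iic_sdiff_Iic]

theorem lengthInUpTo_mono : Monotone (c.lengthInUpTo A) := fun _ _ hab =>
  c.lengthInUpTo_add_volume_Ioc A hab ▸ le_self_add

theorem lengthInUpTo_le_add {a b : ℝ} (hab : a ≤ b) :
    c.lengthInUpTo A b ≤ c.lengthInUpTo A a + ENNReal.ofReal (b - a) := by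
  rw [← c.lengthInUpTo_add_volume_Ioc A hab, ← Real.volume_Ioc]
  gcongr
  exact inter_subset_right

theorem lengthInUpTo_ne_top (s : ℝ) : c.lengthInUpTo A s ≠ ⊤ :=
  c.lengthInUpTo_eq_volume A s ▸
    ne_top_of_le_ne_top measure_Icc_lt_top.ne
      (measure_mono (inter_subset_left.trans inter_subset_left))

theorem continuous_lengthInUpTo : Continuous (c.lengthInUpTo A) := by
  refine continuous_of_le_add_edist 1 ENNReal.one_ne_top fun a b => ?_
  rcases le_total a b with hab | hba
  · exact (c.lengthInUpTo_mono A hab).trans le_self_add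
  · rw [one_mul, edist_dist, Real.dist_eq, abs_of_nonneg (sub_nonneg.2 hba)]
    exact c.lengthInUpTo_le_add A hba

theorem lengthInUpTo_zero : c.lengthInUpTo A 0 = 0 := by
  rw [lengthInUpTo_eq_volume]
  exact measure_mono_null (fun t ht => (⟨ht.1.1.1, ht.2⟩ : t ∈ Icc (0 : ℝ) 0))
    (Real.volume_Icc.trans (by simp))

theorem hittingTime_mem {r : ℝ≥0∞} (hr : r ≤ c.lengthIn A) :
    c.hittingTime A r ∈ {s | s ∈ Icc 0 c.T ∧ r ≤ c.lengthInUpTo A s} :=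
  (isClosed_Icc.inter (isClosed_Ici.preimage (c.continuous_lengthInUpTo A))).csInf_mem
    ⟨c.T, ⟨c.T_nonneg, le_rfl⟩, hr⟩ ⟨0, fun _ hs => hs.1.1⟩

theorem lengthInUpTo_hittingTime {r : ℝ≥0∞} (hr : r ≤ c.lengthIn A) :
    c.lengthInUpTo A (c.hittingTime A r) = r := by
  obtain ⟨⟨h0, hT⟩, hle⟩ := c.hittingTime_mem A hr
  obtain ⟨s, hs, hFs⟩ := intermediate_value_Icc h0 (c.continuous_lengthInUpTo A).continuousOn
    ⟨by simp [lengthInUpTo_zero], hle⟩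
  have : c.hittingTime A r ≤ s :=
    csInf_le ⟨0, fun _ h => h.1.1⟩ ⟨⟨hs.1, hs.2.trans hT⟩, hFs.ge⟩
  rwa [le_antisymm hs.2 this] at hFs

theorem volume_timesIn_inter_uIcc (a b : ℝ) :
    volume (c.timesIn A ∩ uIcc a b) =
      ENNReal.ofReal |(c.lengthInUpTo A a).toReal - (c.lengthInUpTo A b).toReal| := by
  wlog hab : a ≤ b generalizing a b
  · rw [uIcc_comm, abs_sub_comm]
    exact this b a (le_of_not_ge hab)
  have hFa := c.lengthInUpTo_ne_top A a
  have hFb := c.lengthInUpTo_ne_top A b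
  have hFab := c.lengthInUpTo_mono A hab
  have hIoc : volume (c.timesIn A ∩ Icc a b) = volume (c.timesIn A ∩ Ioc a b) :=
    measure_congr (ae_eq_set_inter (ae_eq_refl _) Ioc_ae_eq_Icc).symm
  rw [uIcc_of_le hab, hIoc,
    abs_sub_comm, abs_of_nonneg (sub_nonneg.2 (ENNReal.toReal_mono hFb hFab)),
    ← ENNReal.toReal_sub_of_le hFab hFb, ENNReal.ofReal_toReal (ENNReal.sub_ne_top hFb),
    ← c.lengthInUpTo_add_volume_Ioc A hab, ENNReal.add_sub_cancel_left hFa]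

end RectCurve

section Splice

variable {X : Type*} [MetricSpace X] {x y : X}

/-- The curve follows `η` up to time `s` and then `c ∘ ψ`; only the part of it over `[s, t₀]`,
where `ψ` moves isometrically, is charged. -/
theorem posFn_le_add_volume_of_splice (A : Set X) (η c : RectCurve X x y) {s t₀ T' : ℝ}
    {ψ φ : ℝ → ℝ} (hs : s ∈ Icc 0 η.T) (ht₀ : t₀ ∈ Icc s T') (hψ : LipschitzWith 1 ψ)
    (hψ_maps : MapsTo ψ (Icc s T') (Icc 0 c.T)) (hψT' : ψ T' = c.T)
    (hjoin : η.toFun s = c.toFun (ψ s)) (hφ : Isometry φ) (hψφ : EqOn ψ φ (Icc s t₀)) :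
    posFn x y A (c.toFun (ψ t₀)) ≤
      η.lengthInUpTo A s + volume (c.timesIn A ∩ ψ '' Icc s t₀) := by
  let γ : RectCurve X x y :=
    { T := T'
      T_nonneg := hs.1.trans (ht₀.1.trans ht₀.2)
      toFun := fun t => if t ≤ s then η.toFun t else c.toFun (ψ t)
      lip := (η.lip.mono (Icc_subset_Icc_right hs.2)).ite_le
        (by rw [← one_mul (1 : ℝ≥0)]; exact c.lip.comp hψ.lipschitzOnWith hψ_maps) hjoin
      source := by simp [hs.1, η.source]
      target := by
        by_cases h : T' ≤ s
        · obtain rfl : T' = s := le_antisymm h (ht₀.1.trans ht₀.2)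
          simp [hjoin, hψT', c.target]
        · simp [h, hψT', c.target] }
  have hγt₀ : γ.toFun t₀ = c.toFun (ψ t₀) := by
    by_cases h : t₀ ≤ s
    · obtain rfl : t₀ = s := le_antisymm h ht₀.1
      simp [γ, hjoin]
    · simp [γ, h]
  let E := Icc s t₀ ∩ (c.toFun ∘ ψ) ⁻¹' A
  have htimes : {t | t ∈ Icc 0 (min t₀ γ.T) ∧ γ.toFun t ∈ A} ⊆
      {t | t ∈ Icc 0 (min s η.T) ∧ η.toFun t ∈ A} ∪ E := by
    rintro t ⟨⟨ht0, ht⟩, htA⟩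
    by_cases h : t ≤ s
    · exact Or.inl ⟨⟨ht0, le_min h (h.trans hs.2)⟩, by simpa [γ, h] using htA⟩
    · exact Or.inr
        ⟨⟨(not_le.1 h).le, ht.trans (min_le_left _ _)⟩, by simpa [γ, h] using htA⟩
  have hφE : φ '' E ⊆ c.timesIn A ∩ ψ '' Icc s t₀ := by
    rintro _ ⟨t, ⟨ht, htA⟩, rfl⟩
    rw [← hψφ ht]
    exact ⟨⟨hψ_maps ⟨ht.1, ht.2.trans ht₀.2⟩, htA⟩, mem_image_of_mem ψ ht⟩
  calc posFn x y A (c.toFun (ψ t₀)) ≤ γ.lengthInUpTo A t₀ :=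
        iInf_le_of_le γ <| iInf_le_of_le t₀ <|
          iInf_le_of_le ⟨hs.1.trans ht₀.1, ht₀.2⟩ <| iInf_le _ hγt₀
    _ ≤ η.lengthInUpTo A s + volume E := (measure_mono htimes).trans (measure_union_le _ _)
    _ = η.lengthInUpTo A s + volume (φ '' E) := by rw [hφ.volume_image]
    _ ≤ η.lengthInUpTo A s + volume (c.timesIn A ∩ ψ '' Icc s t₀) := by gcongr

theorem posFn_le_add_volume_Icc_of_le (A : Set X) (η c : RectCurve X x y) {s s₁ s₂ : ℝ}
    (hs : s ∈ Icc 0 η.T) (hs₂ : 0 ≤ s₂) (h : s₂ ≤ s₁) (hs₁ : s₁ ≤ c.T)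
    (hjoin : η.toFun s = c.toFun s₂) :
    posFn x y A (c.toFun s₁) ≤
      η.lengthInUpTo A s + volume (c.timesIn A ∩ Icc s₂ s₁) := by
  set ψ : ℝ → ℝ := fun t => t - s + s₂
  have hψ : Isometry ψ := Isometry.of_dist_eq fun u v => by simp [ψ, Real.dist_eq]
  have hψt₀ : ψ (s + (s₁ - s₂)) = s₁ := by simp only [ψ]; ring
  have himage : ψ '' Icc s (s + (s₁ - s₂)) ⊆ Icc s₂ s₁ := by
    rintro _ ⟨t, ht, rfl⟩
    exact ⟨by linarith [ht.1], by linarith [ht.2]⟩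
  have key := posFn_le_add_volume_of_splice A η c
    (t₀ := s + (s₁ - s₂)) (T' := s + (c.T - s₂)) hs
    ⟨by linarith, by linarith⟩ hψ.lipschitz
    (fun t ht => ⟨by linarith [ht.1], by linarith [ht.2]⟩) (by simp only [ψ]; ring)
    (by simpa [ψ] using hjoin) hψ (eqOn_refl _ _)
  rw [hψt₀] at key
  exact key.trans (by gcongr)

theorem posFn_le_add_volume_Icc_of_ge (A : Set X) (η c : RectCurve X x y) {s s₁ s₂ : ℝ}
    (hs : s ∈ Icc 0 η.T) (hs₁ : 0 ≤ s₁) (h : s₁ ≤ s₂) (hs₂ : s₂ ≤ c.T)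
    (hjoin : η.toFun s = c.toFun s₂) :
    posFn x y A (c.toFun s₁) ≤
      η.lengthInUpTo A s + volume (c.timesIn A ∩ Icc s₁ s₂) := by
  set t₀ := s + (s₂ - s₁)
  -- `c ∘ ψ` runs backwards along `c` from `s₂` to `s₁`, then forwards to `c.T`.
  set ψ : ℝ → ℝ := fun t => s₁ + |t - t₀|
  set φ : ℝ → ℝ := fun t => s + s₂ - t
  have hψ : LipschitzWith 1 ψ := LipschitzWith.of_dist_le_mul fun u v => by
    simpa [ψ, Real.dist_eq] using abs_abs_sub_abs_le_abs_sub (u - t₀) (v - t₀)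
  have hφ : Isometry φ := Isometry.of_dist_eq fun u v => by
    simp only [φ, Real.dist_eq]
    rw [abs_sub_comm]
    ring_nf
  have hψφ : EqOn ψ φ (Icc s t₀) := fun t ht => by
    simp only [ψ, φ, abs_of_nonpos (sub_nonpos.2 ht.2), t₀]
    ring
  have hψt₀ : ψ t₀ = s₁ := by simp [ψ]
  have himage : ψ '' Icc s t₀ ⊆ Icc s₁ s₂ := by
    rintro _ ⟨t, ht, rfl⟩
    rw [hψφ ht]
    exact ⟨by linarith [ht.2], by linarith [ht.1]⟩
  have hψ_maps : MapsTo ψ (Icc s (t₀ + (c.T - s₁))) (Icc 0 c.T) := fun t ht =>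
    ⟨by positivity, by
      have : |t - t₀| ≤ c.T - s₁ := abs_le.2 ⟨by linarith [ht.1], by linarith [ht.2]⟩
      simp only [ψ]
      linarith⟩
  have key := posFn_le_add_volume_of_splice A η c hs ⟨by linarith, by linarith⟩ hψ hψ_maps
    (by simp [ψ, abs_of_nonneg (sub_nonneg.2 (h.trans hs₂))])
    (by rw [hψφ ⟨le_rfl, by linarith⟩]; simpa [φ] using hjoin) hφ hψφ
  rw [hψt₀] at key
  exact key.trans (by gcongr)

theorem posFn_le_posFn_add_volume (A : Set X) (c : RectCurve X x y) {s₁ s₂ : ℝ}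
    (hs₁ : s₁ ∈ Icc 0 c.T) (hs₂ : s₂ ∈ Icc 0 c.T) :
    posFn x y A (c.toFun s₁) ≤
      posFn x y A (c.toFun s₂) + volume (c.timesIn A ∩ uIcc s₁ s₂) := by
  suffices h : ∀ η : RectCurve X x y, ∀ s ∈ Icc 0 η.T, η.toFun s = c.toFun s₂ →
      posFn x y A (c.toFun s₁) ≤
        η.lengthInUpTo A s + volume (c.timesIn A ∩ uIcc s₁ s₂) by
    simp only [posFn, ENNReal.iInf_add]
    exact le_iInf fun η => le_iInf fun s => le_iInf fun hs => le_iInf (h η s hs)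
  intro η s hs hjoin
  rcases le_total s₂ s₁ with h | h
  · rw [uIcc_of_ge h]
    exact posFn_le_add_volume_Icc_of_le A η c hs hs₂.1 h hs₁.2 hjoin
  · rw [uIcc_of_le h]
    exact posFn_le_add_volume_Icc_of_ge A η c hs hs₁.1 h hs₂.2 hjoin

end Splice

theorem stmt7_general {X : Type*} [MetricSpace X] (x y : X) (A : Set X)
    (c : RectCurve X x y)
    (pt : ℝ → X)
    (hpt : ∀ τ : ℝ, pt τ =
      c.toFun (sInf {s : ℝ | s ∈ Set.Icc 0 c.T ∧ ENNReal.ofReal τ ≤ c.lengthInUpTo A s}))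
    (τ₁ τ₂ : ℝ)
    (hτ₁ : τ₁ ∈ Set.Icc 0 (c.lengthIn A).toReal)
    (hτ₂ : τ₂ ∈ Set.Icc 0 (c.lengthIn A).toReal) :
    posFn x y A (pt τ₁) ≤ posFn x y A (pt τ₂) + ENNReal.ofReal |τ₁ - τ₂| := by
  have hpt' : ∀ τ, pt τ = c.toFun (c.hittingTime A (ENNReal.ofReal τ)) := hpt
  have hit : ∀ τ ∈ Icc 0 (c.lengthIn A).toReal,
      c.hittingTime A (ENNReal.ofReal τ) ∈ Icc 0 c.T ∧
        (c.lengthInUpTo A (c.hittingTime A (ENNReal.ofReal τ))).toReal = τ := fun τ hτ =>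
    have hr := ENNReal.ofReal_le_of_le_toReal hτ.2
    ⟨(c.hittingTime_mem A hr).1,
      by rw [c.lengthInUpTo_hittingTime A hr, ENNReal.toReal_ofReal hτ.1]⟩
  obtain ⟨hs₁, hF₁⟩ := hit τ₁ hτ₁
  obtain ⟨hs₂, hF₂⟩ := hit τ₂ hτ₂
  set s₁ := c.hittingTime A (ENNReal.ofReal τ₁)
  set s₂ := c.hittingTime A (ENNReal.ofReal τ₂)
  calc posFn x y A (pt τ₁)
      ≤ posFn x y A (pt τ₂) + volume (c.timesIn A ∩ uIcc s₁ s₂) := by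
        rw [hpt', hpt']
        exact posFn_le_posFn_add_volume A c hs₁ hs₂
    _ = posFn x y A (pt τ₂) + ENNReal.ofReal |τ₁ - τ₂| := by
        rw [c.volume_timesIn_inter_uIcc, hF₁, hF₂]

theorem stmt7 {X : Type*} [MetricSpace X] (x y : X) (A : Set X) (hA : IsClosed A)
    (hsep : IsPathSep x y A) (c : RectCurve X x y)
    (pt : ℝ → X)
    (hpt : ∀ τ : ℝ, pt τ =
      c.toFun (sInf {s : ℝ | s ∈ Set.Icc 0 c.T ∧ ENNReal.ofReal τ ≤ c.lengthInUpTo A s}))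
    (τ₁ τ₂ : ℝ)
    (hτ₁ : τ₁ ∈ Set.Icc 0 (c.lengthIn A).toReal)
    (hτ₂ : τ₂ ∈ Set.Icc 0 (c.lengthIn A).toReal) :
    posFn x y A (pt τ₁) ≤ posFn x y A (pt τ₂) + ENNReal.ofReal |τ₁ - τ₂| :=
  stmt7_general x y A c pt hpt τ₁ τ₂ hτ₁ hτ₂
end

section
/- Let (V,E) be a graph, v,w ∈ V, A ⊆ V a set with disc-width_{v,w}(A) ≥ 1. For every path c ∈ P_{v,w}, the last point z of c lying in A satisfies pos_A(z) ≥ disc-width_{v,w}(A). -/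
open scoped ENNReal

noncomputable section

namespace DiscPaper

variable {V : Type*}

/-- Number of distinct vertices of the walk `c` lying in `A`. -/
def interCount (G : SimpleGraph V) {v w : V} (c : G.Walk v w) (A : Set V) : ℕ :=
  ({q | q ∈ c.support} ∩ A).ncard

/-- Discrete width of `A` between `v` and `w`: infimum over walks from `v` to `w`
of the number of vertices of the walk lying in `A` (`⊤` if there is no walk). -/
def discWidth (G : SimpleGraph V) (v w : V) (A : Set V) : ℝ≥0∞ :=
  ⨅ c : G.Walk v w, (interCount G c A : ℝ≥0∞)

/-- `A` is a discrete separating set between `v` and `w`: every walk from `v`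
to `w` meets `A`. -/
def IsDiscSep (G : SimpleGraph V) (v w : V) (A : Set V) : Prop :=
  ∀ c : G.Walk v w, ∃ q ∈ c.support, q ∈ A

/-- The discrete position function: minimum, over walks `c` from `v` to `w`
passing through `z`, of the number of points of `A` met along `c` up to and
including the first occurrence of `z` (`⊤` if no walk passes through `z`). -/
def posA (G : SimpleGraph V) (v w : V) (A : Set V) (z : V) : ℝ≥0∞ :=
  ⨅ (c : G.Walk v w) (i : Fin c.support.length) (_ : c.support.get i = z),
    (({q | q ∈ c.support.take (↑i + 1)} ∩ A).ncard : ℝ≥0∞)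

/-- The measure of a set of vertices, given a weight function on vertices. -/
def muSet (μ : V → ℝ≥0∞) (A : Set V) : ℝ≥0∞ := ∑' q : A, μ q

/-- Discrete separating ratio, with the conventions that it is `⊤` when the
width is `0`, and `0` when the width is `⊤` (no walk exists). -/
def discSR (G : SimpleGraph V) (v w : V) (μ : V → ℝ≥0∞) (A : Set V) : ℝ≥0∞ :=
  if discWidth G v w A = 0 then ⊤ else muSet μ A / discWidth G v w A

/-- A slim separating set: a discrete separating set such that every point of
`A` is the first intersection point with `A` of some walk from `v` to `w`. -/
def Slim (G : SimpleGraph V) (v w : V) (A : Set V) : Prop :=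
  IsDiscSep G v w A ∧
    ∀ z ∈ A, ∃ (c : G.Walk v w) (i : Fin c.support.length),
      c.support.get i = z ∧ ∀ j : Fin c.support.length, j < i → c.support.get j ∉ A

end DiscPaper

end

section StmtAux

open SimpleGraph

variable {V : Type*} {G : SimpleGraph V} [DecidableEq V]

private lemma support_takeUntil_prefix' {v w u : V} (p : G.Walk v w) (h : u ∈ p.support) :
    (p.takeUntil u h).support <+: p.support := by
  conv_rhs => rw [← p.take_spec h]
  rw [Walk.support_append]
  exact ⟨_, rfl⟩

private lemma length_support_takeUntil_le' {v w u : V} (p : G.Walk v w) (h : u ∈ p.support)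
    (i : Fin p.support.length) (hi : p.support.get i = u) :
    (p.takeUntil u h).support.length ≤ (i : ℕ) + 1 := by
  by_contra hlt
  push_neg at hlt
  have hcount : (p.takeUntil u h).support.count u = 1 := p.count_support_takeUntil_eq_one h
  set L := (p.takeUntil u h).support with hL
  have hne : L ≠ [] := (p.takeUntil u h).support_ne_nil
  have hlast : L.getLast hne = u := (p.takeUntil u h).getLast_support
  have hconcat : L = L.dropLast ++ [u] := by
    conv_lhs => rw [← List.dropLast_append_getLast hne]
    rw [hlast]
  have hdrop : u ∉ L.dropLast := by
    intro hmem
    have h1 : 0 < L.dropLast.count u := List.count_pos_iff.mpr hmem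
    have : L.count u = L.dropLast.count u + 1 := by
      conv_lhs => rw [hconcat]
      simp [List.count_append]
    omega
  apply hdrop
  have hlen1 : L.length = L.dropLast.length + 1 := by
    rw [List.length_dropLast]
    have := List.length_pos_iff.mpr hne
    omega
  have hilt : (i : ℕ) < L.dropLast.length := by omega
  have hpre := support_takeUntil_prefix' p h
  have : L.dropLast[(i : ℕ)] = u := by
    rw [List.getElem_dropLast, hpre.getElem]
    · simpa using hi
  exact this ▸ List.getElem_mem hilt

end StmtAux

theorem stmt12 {V : Type*} (G : SimpleGraph V) (v w : V) (A : Set V)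
    (hW : 1 ≤ DiscPaper.discWidth G v w A)
    (c : G.Walk v w) (i : Fin c.support.length)
    (hi : c.support.get i ∈ A)
    (hlast : ∀ j : Fin c.support.length, i < j → c.support.get j ∉ A) :
    DiscPaper.discWidth G v w A ≤ DiscPaper.posA G v w A (c.support.get i) := by
  classical
  set z := c.support.get i with hz
  rw [DiscPaper.posA]
  refine le_iInf fun c' => le_iInf fun i' => le_iInf fun hzi' => ?_
  have h1 : z ∈ c'.support := by
    rw [← hzi']
    simp only [List.get_eq_getElem]
    exact List.getElem_mem i'.isLt
  have h2 : z ∈ c.reverse.support := by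
    rw [SimpleGraph.Walk.support_reverse, List.mem_reverse, hz]
    simp only [List.get_eq_getElem]
    exact List.getElem_mem i.isLt
  have hin : (i : ℕ) < c.support.length := i.isLt
  set t := c'.takeUntil z h1 with ht
  set e := c.reverse.takeUntil z h2 with he
  set d : G.Walk v w := t.append e.reverse with hd
  -- length bound for e
  have hrevlen : c.reverse.support.length = c.support.length := by
    rw [SimpleGraph.Walk.support_reverse, List.length_reverse]
  have hj : c.support.length - 1 - (i : ℕ) < c.reverse.support.length := by omega
  have hjz : c.reverse.support.get ⟨c.support.length - 1 - (i : ℕ), hj⟩ = z := by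
    simp only [List.get_eq_getElem, SimpleGraph.Walk.support_reverse, List.getElem_reverse]
    have harith : c.support.length - 1 - (c.support.length - 1 - (i : ℕ)) = (i : ℕ) := by omega
    simp only [harith]
    simpa using hz.symm
  have helen : e.support.length ≤ c.support.length - (i : ℕ) := by
    have := length_support_takeUntil_le' c.reverse h2 ⟨c.support.length - 1 - (i : ℕ), hj⟩ hjz
    rw [← he] at this
    simp only at this
    omega
  -- every point of e.support in A is z
  have heA : ∀ q ∈ e.support, q ∈ A → q = z := by
    intro q hq hqA
    obtain ⟨j, hjlt, hjq⟩ := List.getElem_of_mem hq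
    have hpre := support_takeUntil_prefix' c.reverse h2
    have hjlt2 : j < c.reverse.support.length := lt_of_lt_of_le hjlt hpre.length_le
    have hq2 : c.reverse.support[j]'hjlt2 = q := by
      rw [← hpre.getElem hjlt]; exact hjq
    simp only [SimpleGraph.Walk.support_reverse, List.getElem_reverse, List.length_reverse] at hq2
    have hki : (i : ℕ) ≤ c.support.length - 1 - j := by omega
    have hkn : c.support.length - 1 - j < c.support.length := by omega
    rcases eq_or_lt_of_le hki with hik | hik
    · rw [hz, ← hq2]
      simp only [List.get_eq_getElem]
      congr 1
      omega
    · refine absurd ?_ (hlast ⟨c.support.length - 1 - j, hkn⟩ hik)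
      simp only [List.get_eq_getElem]
      rw [hq2]
      exact hqA
  -- t.support ⊆ take (i'+1)
  have htsub : ∀ q ∈ t.support, q ∈ c'.support.take ((i' : ℕ) + 1) := by
    intro q hq
    have hpre := support_takeUntil_prefix' c' h1
    have hle := length_support_takeUntil_le' c' h1 i' hzi'
    have heq : t.support = (c'.support.take ((i' : ℕ) + 1)).take t.support.length := by
      rw [List.take_take, min_eq_left hle, ← List.prefix_iff_eq_take]
      exact hpre
    rw [heq] at hq
    exact List.take_subset _ _ hq
  -- main subset
  have hsub : {q | q ∈ d.support} ∩ A ⊆ {q | q ∈ c'.support.take ((i' : ℕ) + 1)} ∩ A := by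
    rintro q ⟨hq, hqA⟩
    refine ⟨?_, hqA⟩
    have hq' : q ∈ (t.append e.reverse).support := hq
    rw [SimpleGraph.Walk.mem_support_append_iff] at hq'
    rename' hq' => hq
    rcases hq with hq | hq
    · exact htsub q hq
    · rw [SimpleGraph.Walk.support_reverse, List.mem_reverse] at hq
      have : q = z := heA q hq hqA
      exact htsub q (this ▸ SimpleGraph.Walk.end_mem_support t)
  have hfin : ({q | q ∈ c'.support.take ((i' : ℕ) + 1)} ∩ A).Finite :=
    (List.finite_toSet _).inter_of_left _
  calc DiscPaper.discWidth G v w A ≤ (DiscPaper.interCount G d A : ℝ≥0∞) := iInf_le _ d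
    _ ≤ _ := by
        apply Nat.cast_le.mpr
        exact Set.ncard_le_ncard hsub hfin
end

section
/- Let (V,E) be a graph, v,w ∈ V with P_{v,w} ≠ ∅, and A ⊆ V with k := disc-width_{v,w}(A) ≥ 1. For each i ∈ {1,…,k}, the level set A_i := {z ∈ A : pos_A(z) = i} is a discrete separating set between v and w (every path from v to w meets A_i), and moreover disc-width_{v,w}(A_i) = 1. -/
open scoped ENNReal

/-!
Walk along `c` from `v` to `w`, carrying a walk from `v` to the current vertex that meets
fewer than `i` points of `A` (initially the trivial one, unless `v` already lies in `A_i`).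
A step adds at most one point `y` of `A`; if the extended walk now meets `i` points, then
`pos_A(y) ≤ i`, so either `y ∈ A_i` or an optimal walk to `y` meets fewer than `i` points.
Every walk from `v` to `w` meets at least `k ≥ i` points of `A`, so the carried walk never
reaches `w`, and `c` meets `A_i`.

For the width, let `z` be the last point of `A_i` on some walk, follow an optimal walk to `z`
up to its first point `y` of `A_i`, then the given walk after `z`. If `y ≠ z`, the part up
to `y` misses `z ∈ A`, so `pos_A(y) ≤ i - 1`.
-/

namespace SimpleGraph.Walk

variable {V : Type*} {G : SimpleGraph V}

lemma exists_append_of_first_mem {S : Set V} :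
    ∀ {a b : V} (c : G.Walk a b), (∃ y ∈ c.support, y ∈ S) →
      ∃ z ∈ S, ∃ (t : G.Walk a z) (d : G.Walk z b), t.append d = c ∧
        ∀ y ∈ t.support, y ∈ S → y = z
  | a, _, .nil, h => by
    obtain ⟨y, hy, hyS⟩ := h
    obtain rfl : y = a := by simpa using hy
    exact ⟨y, hyS, .nil, .nil, rfl, by simp⟩
  | a, _, .cons hadj c, h => by
    by_cases ha : a ∈ S
    · exact ⟨a, ha, .nil, .cons hadj c, rfl, by simp⟩
    · have hc : ∃ y ∈ c.support, y ∈ S := by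
        obtain ⟨y, hy, hyS⟩ := h
        rcases List.mem_cons.1 (support_cons hadj c ▸ hy) with rfl | hy
        exacts [absurd hyS ha, ⟨y, hy, hyS⟩]
      obtain ⟨z, hzS, t, d, rfl, ht⟩ := exists_append_of_first_mem c hc
      refine ⟨z, hzS, .cons hadj t, d, rfl, fun y hy hyS => ?_⟩
      rcases List.mem_cons.1 (support_cons hadj t ▸ hy) with rfl | hy
      exacts [absurd hyS ha, ht y hy hyS]

end SimpleGraph.Walk

namespace DiscPaper

open SimpleGraph

variable {V : Type*} {G : SimpleGraph V} {A : Set V}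

section interCount

variable {a b a' b' : V}

lemma interCount_lt_of_support_subset {p : G.Walk a b} {c : G.Walk a' b'}
    (h : p.support ⊆ c.support) {z : V} (hzc : z ∈ c.support) (hzA : z ∈ A)
    (hzp : z ∉ p.support) : interCount G p A < interCount G c A :=
  Set.ncard_lt_ncard
    ⟨Set.inter_subset_inter_left A fun _ hq => h hq, fun hsub => hzp (hsub ⟨hzc, hzA⟩).1⟩
    ((List.finite_toSet _).inter_of_left A)

lemma one_le_interCount {c : G.Walk a b} {z : V} (hzc : z ∈ c.support) (hzA : z ∈ A) :
    1 ≤ interCount G c A :=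
  (Set.ncard_pos ((List.finite_toSet _).inter_of_left A)).2 ⟨z, hzc, hzA⟩

lemma interCount_le_one {c : G.Walk a b} {z : V} (h : ∀ y ∈ c.support, y ∈ A → y = z) :
    interCount G c A ≤ 1 :=
  (Set.ncard_le_ncard (t := {z}) fun y hy => h y hy.1 hy.2).trans (Set.ncard_singleton z).le

lemma interCount_nil_of_notMem (ha : a ∉ A) : interCount G (Walk.nil : G.Walk a a) A = 0 := by
  simp [interCount, ha]

lemma interCount_concat_le (p : G.Walk a b) (h : G.Adj b a') :
    interCount G (p.concat h) A ≤ interCount G p A + 1 := by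
  refine (Set.ncard_le_ncard (t := insert a' ({q | q ∈ p.support} ∩ A)) ?_
    (((List.finite_toSet _).inter_of_left A).insert a')).trans (Set.ncard_insert_le _ _)
  rintro q ⟨hq, hqA⟩
  simp only [Walk.support_concat, Set.mem_ofPred_eq, List.mem_append, List.mem_singleton] at hq
  rcases hq with hq | rfl
  exacts [Or.inr ⟨hq, hqA⟩, Or.inl rfl]

lemma interCount_concat_of_notMem (p : G.Walk a b) (h : G.Adj b a') (ha' : a' ∉ A) :
    interCount G (p.concat h) A = interCount G p A := by
  simp only [interCount, Walk.support_concat, List.mem_append, List.mem_singleton]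
  congr 1
  ext q
  constructor
  · rintro ⟨hq | rfl, hqA⟩
    exacts [⟨hq, hqA⟩, absurd hqA ha']
  · exact fun ⟨hq, hqA⟩ => ⟨Or.inl hq, hqA⟩

end interCount

section posA

variable {v w : V}

lemma discWidth_le_interCount (c : G.Walk v w) : discWidth G v w A ≤ interCount G c A :=
  iInf_le _ c

lemma IsDiscSep.one_le_discWidth (h : IsDiscSep G v w A) : 1 ≤ discWidth G v w A :=
  le_iInf fun c => by
    obtain ⟨z, hzc, hzA⟩ := h c
    exact_mod_cast one_le_interCount hzc hzA

lemma posA_le_interCount {z : V} (p : G.Walk v z) (q : G.Walk z w) :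
    posA G v w A z ≤ interCount G p A := by
  have hlen : p.length < (p.append q).support.length := by
    simp [Walk.support_append, Walk.length_support]; omega
  refine iInf₂_le_of_le (p.append q) ⟨p.length, hlen⟩ (iInf_le_of_le ?_ ?_)
  · simp [Walk.support_append, List.getElem_append_left, Walk.support_getElem_length]
  · simp [interCount, Walk.support_append, Walk.length_support]

lemma exists_interCount_lt_of_posA_lt {z : V} {b : ℝ≥0∞} (h : posA G v w A z < b) :
    ∃ p : G.Walk v z, (interCount G p A : ℝ≥0∞) < b := by
  simp only [posA, iInf_lt_iff] at h
  obtain ⟨c, j, hj, hlt⟩ := h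
  have hz : c.getVert j = z := by
    rw [c.getVert_eq_support_getElem (by simpa [Walk.length_support, Nat.lt_succ_iff] using j.2)]
    exact hj
  exact ⟨(c.take j).copy rfl hz, by simpa [interCount, Walk.support_take] using hlt⟩

end posA

/-- The paper's `A_i`. -/
def levelSet (G : SimpleGraph V) (v w : V) (A : Set V) (i : ℕ) : Set V :=
  {z ∈ A | posA G v w A z = i}

section levelSet

variable {v w : V} {i : ℕ}

lemma mem_levelSet_or_exists_interCount_lt {y : V} (hy : y ∈ A) (p : G.Walk v y)
    (hp : interCount G p A ≤ i) (q : G.Walk y w) :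
    y ∈ levelSet G v w A i ∨ ∃ p' : G.Walk v y, interCount G p' A < i := by
  rcases ((posA_le_interCount (A := A) p q).trans (Nat.cast_le.2 hp)).eq_or_lt with h | h
  · exact .inl ⟨hy, h⟩
  · obtain ⟨p', hp'⟩ := exists_interCount_lt_of_posA_lt h
    exact .inr ⟨p', by exact_mod_cast hp'⟩

lemma exists_mem_levelSet_of_interCount_lt (hik : (i : ℝ≥0∞) ≤ discWidth G v w A)
    {x : V} (q : G.Walk x w) (p : G.Walk v x) (hp : interCount G p A < i) :
    ∃ z ∈ q.support, z ∈ levelSet G v w A i := by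
  induction q with
  | nil =>
    have := hik.trans (discWidth_le_interCount p)
    exact absurd (by exact_mod_cast this) hp.not_ge
  | @cons x y w hadj q ih =>
    have hy : y ∈ levelSet G v w A i ∨ ∃ p' : G.Walk v y, interCount G p' A < i := by
      by_cases hyA : y ∈ A
      · exact mem_levelSet_or_exists_interCount_lt hyA (p.concat hadj)
          ((interCount_concat_le p hadj).trans hp) q
      · exact .inr ⟨p.concat hadj, interCount_concat_of_notMem p hadj hyA ▸ hp⟩
    rcases hy with hy | ⟨p', hp'⟩
    · exact ⟨y, by simp, hy⟩
    · obtain ⟨z, hz, hzi⟩ := ih hik p' hp'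
      exact ⟨z, by simp [hz], hzi⟩

theorem isDiscSep_levelSet (hi : 1 ≤ i) (hik : (i : ℝ≥0∞) ≤ discWidth G v w A) :
    IsDiscSep G v w (levelSet G v w A i) := by
  intro c
  by_cases hv : v ∈ A
  · rcases mem_levelSet_or_exists_interCount_lt hv Walk.nil
        ((interCount_le_one (z := v) (by simp)).trans hi) c with hvi | ⟨p, hp⟩
    · exact ⟨v, c.start_mem_support, hvi⟩
    · exact exists_mem_levelSet_of_interCount_lt hik c p hp
  · exact exists_mem_levelSet_of_interCount_lt hik c Walk.nil
      (by rw [interCount_nil_of_notMem hv]; omega)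

theorem discWidth_levelSet_le_one (c : G.Walk v w)
    (hc : ∃ z ∈ c.support, z ∈ levelSet G v w A i) :
    discWidth G v w (levelSet G v w A i) ≤ 1 := by
  set S := levelSet G v w A i
  obtain ⟨z, hzS, t, -, -, ht⟩ := c.reverse.exists_append_of_first_mem (by simpa using hc)
  have hr : ∀ y ∈ t.reverse.support, y ∈ S → y = z := by simpa using ht
  obtain ⟨p, hp⟩ : ∃ p : G.Walk v z, (interCount G p A : ℝ≥0∞) < (i + 1 : ℕ) :=
    exists_interCount_lt_of_posA_lt (by rw [hzS.2]; exact_mod_cast i.lt_succ_self)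
  replace hp : interCount G p A ≤ i := Nat.lt_succ_iff.1 (Nat.cast_lt.1 hp)
  obtain ⟨y, hyS, t', d, rfl, ht'⟩ := p.exists_append_of_first_mem ⟨z, p.end_mem_support, hzS⟩
  obtain rfl : y = z := by
    by_contra hyz
    have hzt' : z ∉ t'.support := fun hz => hyz (ht' z hz hzS).symm
    have hlt : interCount G t' A < i :=
      (interCount_lt_of_support_subset (Walk.support_subset_support_append_left t' d)
        (t'.append d).end_mem_support hzS.1 hzt').trans_le hp
    have := hyS.2 ▸ posA_le_interCount t' (d.append t.reverse)
    exact hlt.not_ge (by exact_mod_cast this)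
  have hone : interCount G (t'.append t.reverse) S ≤ 1 := interCount_le_one fun u hu huS => by
    rcases List.mem_append.1 (Walk.support_append t' t.reverse ▸ hu) with hu | hu
    exacts [ht' u hu huS, hr u (List.mem_of_mem_tail hu) huS]
  exact (discWidth_le_interCount _).trans (by exact_mod_cast hone)

end levelSet

end DiscPaper

theorem stmt14_general {V : Type*} (G : SimpleGraph V) (v w : V)
    (hne : Nonempty (G.Walk v w)) (A : Set V)
    (i : ℕ) (hi1 : 1 ≤ i) (hik : (i : ℝ≥0∞) ≤ DiscPaper.discWidth G v w A) :
    DiscPaper.IsDiscSep G v w {z ∈ A | DiscPaper.posA G v w A z = (i : ℝ≥0∞)} ∧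
      DiscPaper.discWidth G v w {z ∈ A | DiscPaper.posA G v w A z = (i : ℝ≥0∞)} = 1 := by
  have hsep := DiscPaper.isDiscSep_levelSet hi1 hik
  obtain ⟨c⟩ := hne
  exact ⟨hsep, le_antisymm (DiscPaper.discWidth_levelSet_le_one c (hsep c)) hsep.one_le_discWidth⟩

theorem stmt14 {V : Type*} (G : SimpleGraph V) (v w : V)
    (hne : Nonempty (G.Walk v w)) (A : Set V)
    (hk : 1 ≤ DiscPaper.discWidth G v w A)
    (i : ℕ) (hi1 : 1 ≤ i) (hik : (i : ℝ≥0∞) ≤ DiscPaper.discWidth G v w A) :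
    DiscPaper.IsDiscSep G v w {z ∈ A | DiscPaper.posA G v w A z = (i : ℝ≥0∞)} ∧
      DiscPaper.discWidth G v w {z ∈ A | DiscPaper.posA G v w A z = (i : ℝ≥0∞)} = 1 :=
  stmt14_general G v w hne A i hi1 hik
end

section
/- Let (X,d,m) be a metric measure space, x,y ∈ X, and suppose there exist C > 0, L ≥ 1 such that for every Borel set A ⊆ X one has width_{x,y}(A) ≤ C m_{x,y}^L(A) (1-set-connectedness at x,y). Then for every topological separating set Ω from x to y with m_{x,y}^L(∂Ω) = 0, the Minkowski content with respect to m_{x,y}^L satisfies (m_{x,y}^L)^+(Ω) ≥ 1/C. -/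
open MeasureTheory Metric Set Filter
open scoped ENNReal NNReal

theorem stmt19 {X : Type*} [MetricSpace X] [MeasurableSpace X] [BorelSpace X] (m : MeasureTheory.Measure X) (x y : X)
    (Cc L : ℝ) (hCc : 0 < Cc) (hL : 1 ≤ L)
    (hconn : ∀ A : Set X, MeasurableSet A →
      width x y A ≤ ENNReal.ofReal Cc * rieszMeasure m x y L A)
    (Ω : Set X) (hΩ : IsSepSet x y Ω)
    (hfr : rieszMeasure m x y L (frontier Ω) = 0) :
    (ENNReal.ofReal Cc)⁻¹ ≤ mink (rieszMeasure m x y L) Ω := by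
  obtain ⟨hcl, ρ, hρ, hx, hy⟩ := hΩ
  set μ := rieszMeasure m x y L with hμ
  have hxΩ : x ∈ interior Ω := hx (mem_ball_self hρ)
  have hΩne : Ω.Nonempty := ⟨x, interior_subset hxΩ⟩
  have hyd : ρ ≤ infDist y Ω := by
    by_contra h
    obtain ⟨z, hzΩ, hzd⟩ := (infDist_lt_iff hΩne).1 (lt_of_not_ge h)
    exact hy (by simpa [Metric.mem_ball, dist_comm] using hzd) hzΩ
  -- key width estimate
  have key : ∀ r : ℝ, 0 < r → r < ρ →
      ENNReal.ofReal r ≤ width x y (cthickening r Ω \ Ω) := by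
    intro r hr hrρ
    refine le_iInf fun c => ?_
    have hT : (0 : ℝ) ≤ c.T := c.T_nonneg
    set g : ℝ → ℝ := fun t => (Set.projIcc 0 c.T hT t : ℝ) with hg
    have hgmem : ∀ t, g t ∈ Set.Icc 0 c.T := fun t => (Set.projIcc 0 c.T hT t).2
    set ψ : ℝ → ℝ := fun t => infDist (c.toFun (g t)) Ω with hψ
    have hψlip : LipschitzWith 1 ψ := by
      refine LipschitzWith.of_dist_le_mul fun s t => ?_
      calc dist (ψ s) (ψ t) ≤ 1 * dist (c.toFun (g s)) (c.toFun (g t)) :=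
            (lipschitz_infDist_pt Ω).dist_le_mul _ _
        _ ≤ 1 * dist (g s) (g t) := by
            have := c.lip.dist_le_mul _ (hgmem s) _ (hgmem t)
            simpa using this
        _ ≤ 1 * dist s t := by
            have := (LipschitzWith.projIcc hT).dist_le_mul s t
            simpa [Subtype.dist_eq, hg] using this
    have hψ0 : ψ 0 = 0 := by
      have : g 0 = 0 := by simp [hg, Set.projIcc_left]
      rw [hψ]; simp only [this, c.source]
      exact infDist_zero_of_mem (interior_subset hxΩ)
    have hψT : ρ ≤ ψ c.T := by
      have : g c.T = c.T := by simp [hg, Set.projIcc_right]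
      rw [hψ]; simp only [this, c.target]; exact hyd
    have hψnn : ∀ t, 0 ≤ ψ t := fun t => infDist_nonneg
    set S : Set ℝ := {t | t ≤ c.T ∧ ψ t ≤ 0} with hS
    have hScl : IsClosed S :=
      (isClosed_Iic.preimage continuous_id).inter
        (isClosed_le hψlip.continuous continuous_const)
    have hSne : S.Nonempty := ⟨0, hT, hψ0.le⟩
    have hSbdd : BddAbove S := ⟨c.T, fun t ht => ht.1⟩
    set a := sSup S with ha
    have haS : a ∈ S := hScl.csSup_mem hSne hSbdd
    have ha0 : 0 ≤ a := le_csSup hSbdd ⟨hT, hψ0.le⟩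
    have hψa : ψ a = 0 := le_antisymm haS.2 (hψnn a)
    set S' : Set ℝ := {t | a ≤ t ∧ r ≤ ψ t} with hS'
    have hS'cl : IsClosed S' :=
      (isClosed_Ici.preimage continuous_id).inter
        (isClosed_le continuous_const hψlip.continuous)
    have hS'ne : S'.Nonempty := ⟨c.T, haS.1, hrρ.le.trans hψT⟩
    have hS'bdd : BddBelow S' := ⟨a, fun t ht => ht.1⟩
    set b := sInf S' with hb
    have hbS' : b ∈ S' := hS'cl.csInf_mem hS'ne hS'bdd
    have hbT : b ≤ c.T := csInf_le hS'bdd ⟨haS.1, hrρ.le.trans hψT⟩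
    have hab : r ≤ b - a := by
      have h1 : dist (ψ b) (ψ a) ≤ 1 * dist b a := hψlip.dist_le_mul b a
      have h2 : ψ b - ψ a ≤ dist (ψ b) (ψ a) := by
        rw [Real.dist_eq]; exact le_abs_self _
      have h3 : dist b a = b - a := by
        rw [Real.dist_eq, abs_of_nonneg (sub_nonneg.2 hbS'.1)]
      nlinarith [hbS'.2]
    have hsub : Set.Ioo a b ⊆
        {t : ℝ | t ∈ Set.Icc 0 (min c.T c.T) ∧ c.toFun t ∈ cthickening r Ω \ Ω} := by
      intro t ht
      have htI : t ∈ Set.Icc 0 c.T := ⟨ha0.trans ht.1.le, ht.2.le.trans hbT⟩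
      have hgt : g t = t := by
        simp [hg, Set.projIcc_of_mem hT htI]
      have hψt : ψ t = infDist (c.toFun t) Ω :=
        congrArg (fun s => infDist (c.toFun s) Ω) hgt
      have hpos : 0 < ψ t := by
        by_contra h
        exact absurd (le_csSup hSbdd ⟨htI.2, le_of_not_gt h⟩) (not_le.2 ht.1)
      have hlt : ψ t < r := by
        by_contra h
        exact absurd (csInf_le hS'bdd ⟨ht.1.le, le_of_not_gt h⟩) (not_le.2 ht.2)
      refine ⟨by simpa [min_self] using htI, ?_, ?_⟩
      · obtain ⟨z, hzΩ, hzd⟩ := (infDist_lt_iff hΩne).1 (by rwa [hψt] at hlt)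
        exact mem_cthickening_of_dist_le _ z r Ω hzΩ hzd.le
      · exact (hcl.notMem_iff_infDist_pos hΩne).2 (by rwa [hψt] at hpos)
    calc ENNReal.ofReal r ≤ ENNReal.ofReal (b - a) := ENNReal.ofReal_le_ofReal hab
      _ = volume (Set.Ioo a b) := (Real.volume_Ioo).symm
      _ ≤ _ := measure_mono hsub
  -- conclude via the 1-set-connectedness hypothesis
  refine le_liminf_of_le (by isBoundedDefault) ?_
  have hev : ∀ᶠ r in nhdsWithin (0 : ℝ) (Set.Ioi 0), r < ρ ∧ 0 < r := by
    filter_upwards [eventually_nhdsWithin_of_eventually_nhds (gt_mem_nhds hρ),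
      self_mem_nhdsWithin] with r h1 h2
    exact ⟨h1, h2⟩
  filter_upwards [hev] with r ⟨hrρ, hr⟩
  have hmeas : MeasurableSet (cthickening r Ω \ Ω) :=
    (isClosed_cthickening.measurableSet).diff hcl.measurableSet
  have h1 : ENNReal.ofReal r ≤ ENNReal.ofReal Cc * μ (cthickening r Ω \ Ω) :=
    (key r hr hrρ).trans (hconn _ hmeas)
  have hr0 : ENNReal.ofReal r ≠ 0 := (ENNReal.ofReal_pos.2 hr).ne'
  have hrtop : ENNReal.ofReal r ≠ ⊤ := ENNReal.ofReal_ne_top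
  rw [ENNReal.le_div_iff_mul_le (Or.inl hr0) (Or.inl hrtop)]
  have hC0 : ENNReal.ofReal Cc ≠ 0 := (ENNReal.ofReal_pos.2 hCc).ne'
  rw [mul_comm] at h1
  rw [← ENNReal.div_le_iff_le_mul (Or.inl hC0) (Or.inl ENNReal.ofReal_ne_top)] at h1
  calc (ENNReal.ofReal Cc)⁻¹ * ENNReal.ofReal r
      = ENNReal.ofReal r / ENNReal.ofReal Cc := by
        rw [mul_comm, div_eq_mul_inv]
    _ ≤ μ (cthickening r Ω \ Ω) := h1
end
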